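/- arXiv:1506.05835 — 9 statements merged into one kernel-verified Lean document; each statement's English description precedes it below -/
import Mathlib

section
/- Let T be a homeomorphism of a compact metric space X. If for every ε > 0 there exists a finite ε-network A ⊆ X such that T^n(A) is an ε-network for every n ∈ ℤ, then (X,T) is nonwandering, i.e., every point of X is a nonwandering point. -/
open Metric Filter Set Topology
open scoped Classical

variable {X : Type*}

/-- A set of naturals is syndetic: bounded gaps. -/
def Syndetic (S : Set ℕ) : Prop := ∃ n : ℕ, ∀ m : ℕ, ∃ k ∈ S, m ≤ k ∧ k ≤ m + n

/-- Forward orbit of a point. -/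
def fwdOrbit (T : X → X) (y : X) : Set X := Set.range fun k : ℕ => T^[k] y

/-- A point is minimal (almost periodic): its forward orbit closure is a minimal set. -/
def IsMinimalPt [TopologicalSpace X] (T : X → X) (y : X) : Prop :=
  ∀ z ∈ closure (fwdOrbit T y), closure (fwdOrbit T z) = closure (fwdOrbit T y)

/-- ℤ-iteration of a homeomorphism. -/
noncomputable def zIter [TopologicalSpace X] (T : X ≃ₜ X) (n : ℤ) : X → X :=
  if 0 ≤ n then (⇑T)^[n.toNat] else (⇑T.symm)^[(-n).toNat]

/-- `A` is an `ε`-network: every point of the space is within `ε` of `A`. -/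
def IsNet [PseudoMetricSpace X] (ε : ℝ) (A : Set X) : Prop :=
  ∀ x : X, ∃ a ∈ A, dist x a ≤ ε

/-- A point is nonwandering (w.r.t. forward iterates). -/
def NonWandering [TopologicalSpace X] (T : X → X) (x : X) : Prop :=
  ∀ U : Set X, IsOpen U → x ∈ U → ∃ k : ℕ, 1 ≤ k ∧ ((fun p => T^[k] p) '' U ∩ U).Nonempty

/-- One-sided `d`-pseudotrajectory. -/
def IsPseudoTraj [PseudoMetricSpace X] (T : X → X) (d : ℝ) (x : ℕ → X) : Prop :=
  ∀ k : ℕ, dist (x (k + 1)) (T (x k)) ≤ d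

/-- Two-sided `d`-pseudotrajectory. -/
def IsPseudoTrajZ [PseudoMetricSpace X] (T : X → X) (d : ℝ) (x : ℤ → X) : Prop :=
  ∀ k : ℤ, dist (x (k + 1)) (T (x k)) ≤ d

/-- A chain recurrent point. -/
def ChainRec [PseudoMetricSpace X] (T : X → X) (x : X) : Prop :=
  ∀ d > (0 : ℝ), ∃ n : ℕ, 1 ≤ n ∧ ∃ c : ℕ → X, c 0 = x ∧ c n = x ∧
    ∀ k < n, dist (c (k + 1)) (T (c k)) ≤ d

/-- ω-limit set of a point under a map. -/
def omegaSet [TopologicalSpace X] (T : X → X) (y : X) : Set X :=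
  {p | ∃ φ : ℕ → ℕ, StrictMono φ ∧ Tendsto (fun n => T^[φ n] y) atTop (nhds p)}

/-- The set of recurrent points (`x ∈ ω(x)`). -/
def RecurrentPts [TopologicalSpace X] (T : X → X) : Set X := {x | x ∈ omegaSet T x}

/-- The multishadowing property (for homeomorphisms, two-sided). -/
def Multishadowing [PseudoMetricSpace X] (T : X ≃ₜ X) : Prop :=
  ∀ ε > (0 : ℝ), ∃ d > (0 : ℝ), ∀ x : ℤ → X, IsPseudoTrajZ (⇑T) d x →
    ∃ Y : Finset X, ∀ k : ℤ, ∃ y ∈ Y, dist (x k) (zIter T k y) < ε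

/-- Topological support of a measure: points all of whose open neighborhoods
have positive measure. -/
def msupp [TopologicalSpace X] [MeasurableSpace X] (μ : MeasureTheory.Measure X) : Set X :=
  {x | ∀ U : Set X, IsOpen U → x ∈ U → 0 < μ U}

/-- Counting function for density computations. -/
noncomputable def cnt (K : Set ℕ) (N : ℕ) : ℝ :=
  ((Finset.range (N + 1)).filter (· ∈ K)).card

/-! Fix `x ∈ U` and a closed ball `B ⊆ U` of radius `r` about `x`. For a finite `A` whose every
forward image `Tⁿ A` is an `r`-network, each `Tⁿ A` meets `B`, so by pigeonhole one `a ∈ A` has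
`Tᵐ a, Tⁿ a ∈ B` for some `m < n`; then `Tⁿ⁻ᵐ` maps the point `Tᵐ a` of `U` back into `U`. -/

theorem Function.exists_iterate_image_inter_nonempty_of_finite {α : Type*} {f : α → α}
    {A V : Set α} (hA : A.Finite) (hV : ∀ n : ℕ, (f^[n] '' A ∩ V).Nonempty) :
    ∃ k : ℕ, 1 ≤ k ∧ (f^[k] '' V ∩ V).Nonempty := by
  have : Finite A := hA
  have hV' : ∀ n : ℕ, ∃ a : A, f^[n] a ∈ V := fun n ↦ by
    obtain ⟨_, ⟨a, ha, rfl⟩, hmem⟩ := hV n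
    exact ⟨⟨a, ha⟩, hmem⟩
  choose a ha using hV'
  obtain ⟨m, n, hne, hmn⟩ := Finite.exists_ne_map_eq_of_infinite a
  wlog hlt : m < n generalizing m n
  · exact this n m hne.symm hmn.symm (hne.lt_or_gt.resolve_left hlt)
  refine ⟨n - m, by omega, _, mem_image_of_mem _ (ha m), ?_⟩
  rw [← Function.iterate_add_apply, Nat.sub_add_cancel hlt.le, hmn]
  exact ha n

theorem zIter_natCast [TopologicalSpace X] (T : X ≃ₜ X) (n : ℕ) : zIter T n = (⇑T)^[n] := by
  simp [zIter]

theorem stmt1_general [MetricSpace X] (T : X ≃ₜ X)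
    (h : ∀ ε > (0 : ℝ), ∃ A : Finset X, ∀ n : ℤ, IsNet ε (zIter T n '' (A : Set X))) :
    ∀ x : X, NonWandering (⇑T) x := by
  intro x U hU hxU
  obtain ⟨r, hr, hrU⟩ := nhds_basis_closedBall.mem_iff.mp (hU.mem_nhds hxU)
  obtain ⟨A, hA⟩ := h r hr
  have hmeet : ∀ n : ℕ, ((⇑T)^[n] '' (A : Set X) ∩ closedBall x r).Nonempty := fun n ↦ by
    obtain ⟨p, hp, hxp⟩ := hA n x
    rw [zIter_natCast] at hp
    exact ⟨p, hp, mem_closedBall_comm.mp hxp⟩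
  obtain ⟨k, hk, hkV⟩ :=
    Function.exists_iterate_image_inter_nonempty_of_finite A.finite_toSet hmeet
  exact ⟨k, hk, hkV.mono (inter_subset_inter (image_mono hrU) hrU)⟩

theorem stmt1 [MetricSpace X] [CompactSpace X] (T : X ≃ₜ X)
    (h : ∀ ε > (0 : ℝ), ∃ A : Finset X, ∀ n : ℤ, IsNet ε (zIter T n '' (A : Set X))) :
    ∀ x : X, NonWandering (⇑T) x :=
  stmt1_general T h
end

section
/- Let T : X → X be a continuous map of a compact metric space X. For every ε > 0 there exists d > 0 such that for every one-sided d-pseudotrajectory {x_k}_{k≥0} there exist a minimal point y ∈ X and an infinite set K ⊆ ℕ of positive upper density such that ρ(x_k, T^k(y)) < ε for all k ∈ K. -/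
open Metric Filter Set Topology
open scoped Classical

variable {X : Type*}

/-!
A pseudotrajectory `x`, seen through its shifts `j ↦ (x (j + n))ₙ` in the compact space `ℕ → X`,
has a cluster point `u` each of whose neighbourhoods is visited along a set of positive upper
density: density-zero sets form an ideal, so finitely many of them cannot cover `ℕ`. Such a `u` is
again a `d`-pseudotrajectory, and by compactness, for `d` small, every `d`-pseudotrajectory passes
near a minimal point `q`: a limit of pseudotrajectories with vanishing errors is a true orbit, whose
orbit closure contains a minimal set. So `x` stays near `q` along a set of positive upper density.
The returns of `q` to its neighbourhood have bounded gaps `≤ g`, which splits this set into `g + 1`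
pieces, one of positive upper density, along which `x` is shadowed by the minimal point `T^[i] q`.
-/

open Metric Filter Set Topology

def DensityZero (K : Set ℕ) : Prop :=
  Tendsto (fun N : ℕ => cnt K N / (N : ℝ)) atTop (𝓝 0)

section Density

variable {K K' : Set ℕ}

lemma cnt_nonneg (K : Set ℕ) (N : ℕ) : 0 ≤ cnt K N := by
  unfold cnt; positivity

lemma cnt_mono (h : K ⊆ K') (N : ℕ) : cnt K N ≤ cnt K' N := by
  unfold cnt
  exact_mod_cast Finset.card_le_card (Finset.monotone_filter_right _ fun _ _ hk => h hk)

lemma cnt_le (K : Set ℕ) (N : ℕ) : cnt K N ≤ N + 1 := by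
  unfold cnt
  exact_mod_cast (Finset.card_filter_le _ _).trans (Finset.card_range _).le

lemma cnt_biUnion_le {ι : Type*} (s : Finset ι) (f : ι → Set ℕ) (N : ℕ) :
    cnt (⋃ i ∈ s, f i) N ≤ ∑ i ∈ s, cnt (f i) N := by
  unfold cnt
  have hsub : (Finset.range (N + 1)).filter (· ∈ ⋃ i ∈ s, f i) ⊆
      s.biUnion fun i => (Finset.range (N + 1)).filter (· ∈ f i) := by
    intro k hk
    obtain ⟨hkN, hkf⟩ := Finset.mem_filter.mp hk
    obtain ⟨i, hi, hki⟩ := mem_iUnion₂.mp hkf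
    exact Finset.mem_biUnion.mpr ⟨i, hi, Finset.mem_filter.mpr ⟨hkN, hki⟩⟩
  exact_mod_cast (Finset.card_le_card hsub).trans Finset.card_biUnion_le

lemma cnt_preimage_add_le (K : Set ℕ) (k N : ℕ) : cnt ((· + k) ⁻¹' K) N ≤ cnt K (N + k) := by
  unfold cnt
  have himg : ((Finset.range (N + 1)).filter (· ∈ (· + k) ⁻¹' K)).image (· + k) ⊆
      (Finset.range (N + k + 1)).filter (· ∈ K) := by
    intro m hm
    obtain ⟨j, hj, rfl⟩ := Finset.mem_image.mp hm
    obtain ⟨hjN, hjK⟩ := Finset.mem_filter.mp hj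
    exact Finset.mem_filter.mpr ⟨Finset.mem_range.mpr (by grind), hjK⟩
  have := Finset.card_le_card himg
  rw [Finset.card_image_of_injective _ (add_left_injective k)] at this
  exact_mod_cast this

lemma DensityZero.mono (hK' : DensityZero K') (h : K ⊆ K') : DensityZero K :=
  squeeze_zero (fun N => div_nonneg (cnt_nonneg K N) N.cast_nonneg)
    (fun N => div_le_div_of_nonneg_right (cnt_mono h N) N.cast_nonneg) hK'

lemma densityZero_biUnion {ι : Type*} (s : Finset ι) {f : ι → Set ℕ}
    (h : ∀ i ∈ s, DensityZero (f i)) : DensityZero (⋃ i ∈ s, f i) := by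
  have hsum : Tendsto (fun N : ℕ => ∑ i ∈ s, cnt (f i) N / (N : ℝ)) atTop (𝓝 0) := by
    simpa using tendsto_finsetSum s h
  refine squeeze_zero (fun N => div_nonneg (cnt_nonneg _ N) N.cast_nonneg) (fun N => ?_) hsum
  rw [← Finset.sum_div]
  exact div_le_div_of_nonneg_right (cnt_biUnion_le s f N) N.cast_nonneg

lemma not_densityZero_univ : ¬DensityZero univ := by
  intro h
  obtain ⟨N, hN, hsmall⟩ :=
    ((eventually_ge_atTop 1).and (h.eventually (gt_mem_nhds one_pos))).exists
  have hcnt : cnt univ N = N + 1 := by simp [cnt]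
  have hNpos : (0 : ℝ) < N := by exact_mod_cast hN
  rw [hcnt, div_lt_one hNpos] at hsmall
  linarith

lemma Set.Finite.densityZero (hK : K.Finite) : DensityZero K := by
  have hbound : ∀ N, cnt K N ≤ hK.toFinset.card := fun N => by
    unfold cnt
    exact_mod_cast Finset.card_le_card fun k hk => hK.mem_toFinset.mpr (Finset.mem_filter.mp hk).2
  exact squeeze_zero (fun N => div_nonneg (cnt_nonneg K N) N.cast_nonneg)
    (fun N => div_le_div_of_nonneg_right (hbound N) N.cast_nonneg)
    (tendsto_const_div_atTop_nhds_zero_nat _)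

lemma infinite_of_not_densityZero (h : ¬DensityZero K) : K.Infinite :=
  fun hK => h hK.densityZero

lemma DensityZero.preimage_add (h : DensityZero K) (k : ℕ) : DensityZero ((· + k) ⁻¹' K) := by
  have hshift : Tendsto (fun N : ℕ => cnt K (N + k) / ((N : ℝ) + k)) atTop (𝓝 0) := by
    refine (h.comp (tendsto_add_atTop_nat k)).congr fun N => ?_
    simp
  have hratio : Tendsto (fun N : ℕ => 1 + (k : ℝ) / N) atTop (𝓝 1) := by
    simpa using tendsto_const_nhds.add (tendsto_const_div_atTop_nhds_zero_nat (k : ℝ))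
  refine squeeze_zero (fun N => div_nonneg (cnt_nonneg _ N) N.cast_nonneg) (fun N => ?_)
    (by simpa using hshift.mul hratio)
  rcases N.eq_zero_or_pos with rfl | hN
  · simp only [CharP.cast_eq_zero, div_zero]
    exact mul_nonneg (div_nonneg (cnt_nonneg _ _) (by positivity)) (by simp)
  · have hN' : (0 : ℝ) < N := by exact_mod_cast hN
    calc cnt ((· + k) ⁻¹' K) N / N ≤ cnt K (N + k) / N :=
          div_le_div_of_nonneg_right (cnt_preimage_add_le K k N) hN'.le
      _ = cnt K (N + k) / (N + k) * (1 + k / N) := by field_simp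

lemma limsup_pos_of_not_densityZero (h : ¬DensityZero K) :
    0 < limsup (fun N : ℕ => cnt K N / (N : ℝ)) atTop := by
  have hnonneg : ∀ N : ℕ, 0 ≤ cnt K N / (N : ℝ) := fun N =>
    div_nonneg (cnt_nonneg K N) N.cast_nonneg
  have hle_two : ∀ N : ℕ, cnt K N / (N : ℝ) ≤ 2 := fun N => by
    rcases N.eq_zero_or_pos with rfl | hN
    · simp
    · have hN' : (1 : ℝ) ≤ N := by exact_mod_cast hN
      rw [div_le_iff₀ (by linarith)]
      linarith [cnt_le K N]
  have hbdd : IsBoundedUnder (· ≤ ·) atTop fun N : ℕ => cnt K N / (N : ℝ) :=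
    isBoundedUnder_of ⟨2, hle_two⟩
  have hbdd' : IsBoundedUnder (· ≥ ·) atTop fun N : ℕ => cnt K N / (N : ℝ) :=
    isBoundedUnder_of ⟨0, hnonneg⟩
  by_contra! hlimsup
  exact h (tendsto_of_le_liminf_of_limsup_le
    (le_liminf_of_le hbdd.isCoboundedUnder_flip (Eventually.of_forall hnonneg)) hlimsup hbdd hbdd')

end Density

lemma exists_forall_nhds_not_densityZero {Y : Type*} [TopologicalSpace Y] [CompactSpace Y]
    (s : ℕ → Y) : ∃ y, ∀ U ∈ 𝓝 y, ¬DensityZero (s ⁻¹' U) := by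
  by_contra! h
  choose U hU hUzero using h
  obtain ⟨t, -, hcover⟩ := isCompact_univ.elim_nhds_subcover U fun y _ => hU y
  refine not_densityZero_univ ((densityZero_biUnion t fun y _ => hUzero y).mono fun j _ => ?_)
  simpa using hcover (mem_univ (s j))

section MinimalPoints

variable [TopologicalSpace X] {T : X → X}

lemma self_mem_closure_fwdOrbit (y : X) : y ∈ closure (fwdOrbit T y) :=
  subset_closure ⟨0, rfl⟩

lemma mapsTo_closure_fwdOrbit (hT : Continuous T) (y : X) :
    MapsTo T (closure (fwdOrbit T y)) (closure (fwdOrbit T y)) := by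
  refine MapsTo.closure (fun _ ⟨k, hk⟩ => ⟨k + 1, ?_⟩) hT
  rw [← hk]
  exact Function.iterate_succ_apply' T k y

lemma closure_fwdOrbit_subset {A : Set X} (hA : IsClosed A) (hinv : MapsTo T A A) {z : X}
    (hz : z ∈ A) : closure (fwdOrbit T z) ⊆ A :=
  closure_minimal (range_subset_iff.mpr fun k => hinv.iterate k hz) hA

lemma exists_isMinimalPt_mem [CompactSpace X] (hT : Continuous T) {A : Set X} (hA : IsClosed A)
    (hne : A.Nonempty) (hinv : MapsTo T A A) : ∃ m ∈ A, IsMinimalPt T m := by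
  let S : Set (Set X) := {B | B.Nonempty ∧ IsClosed B ∧ MapsTo T B B}
  have hchain_lb : ∀ c ⊆ S, IsChain (· ⊆ ·) c → c.Nonempty → ∃ lb ∈ S, ∀ B ∈ c, lb ⊆ B := by
    intro c hc hchain hcne
    have : Nonempty c := hcne.to_subtype
    have hdir : DirectedOn (· ⊇ ·) c := fun a ha b hb =>
      (hchain.total ha hb).elim (fun h => ⟨a, ha, subset_rfl, h⟩) fun h => ⟨b, hb, h, subset_rfl⟩
    refine ⟨⋂₀ c, ⟨?_, isClosed_sInter fun B hB => (hc hB).2.1,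
      fun z hz => mem_sInter.mpr fun B hB => (hc hB).2.2 (hz B hB)⟩,
      fun B hB => sInter_subset_of_mem hB⟩
    exact IsCompact.nonempty_sInter_of_directed_nonempty_isCompact_isClosed hdir
      (fun B hB => (hc hB).1) (fun B hB => (hc hB).2.1.isCompact) fun B hB => (hc hB).2.1
  obtain ⟨M, hMA, hM⟩ := zorn_superset_nonempty S hchain_lb A ⟨hne, hA, hinv⟩
  obtain ⟨⟨m, hm⟩, hMcl, hMinv⟩ := hM.prop
  have horbit : ∀ z ∈ M, closure (fwdOrbit T z) = M := fun z hz =>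
    hM.eq_of_subset
      ⟨⟨z, self_mem_closure_fwdOrbit z⟩, isClosed_closure, mapsTo_closure_fwdOrbit hT z⟩
      (closure_fwdOrbit_subset hMcl hMinv hz)
  refine ⟨m, hMA hm, fun z hz => ?_⟩
  rw [horbit m hm] at hz ⊢
  exact horbit z hz

lemma IsMinimalPt.iterate {q : X} (hq : IsMinimalPt T q) (i : ℕ) : IsMinimalPt T (T^[i] q) := by
  have horbit := hq _ (subset_closure ⟨i, rfl⟩)
  intro z hz
  rw [horbit] at hz ⊢
  exact hq z hz

/-- Every point of the orbit closure of `q` comes back to the neighbourhood `U` of `q`, and by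
compactness within a bounded time. -/
lemma IsMinimalPt.syndetic_setOf_iterate_mem [CompactSpace X] (hT : Continuous T) {q : X}
    (hq : IsMinimalPt T q) {U : Set X} (hU : IsOpen U) (hqU : q ∈ U) :
    Syndetic {k | T^[k] q ∈ U} := by
  have hvisit : closure (fwdOrbit T q) ⊆ ⋃ n : ℕ, T^[n] ⁻¹' U := fun z hz => by
    have hqz : q ∈ closure (fwdOrbit T z) := (hq z hz).symm ▸ self_mem_closure_fwdOrbit q
    obtain ⟨_, hwU, n, rfl⟩ := mem_closure_iff_nhds.mp hqz U (hU.mem_nhds hqU)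
    exact mem_iUnion.mpr ⟨n, hwU⟩
  obtain ⟨t, ht⟩ := isClosed_closure.isCompact.elim_finite_subcover _
    (fun n => hU.preimage (hT.iterate n)) hvisit
  refine ⟨t.sup id, fun m => ?_⟩
  obtain ⟨n, hn, hnU⟩ := mem_iUnion₂.mp (ht (subset_closure ⟨m, rfl⟩))
  have hn_le : n ≤ t.sup id := Finset.le_sup (f := id) hn
  exact ⟨n + m, by rwa [mem_ofPred_eq, Function.iterate_add_apply], by omega, by omega⟩

lemma IsMinimalPt.exists_iterate_not_densityZero [CompactSpace X] (hT : Continuous T) {q : X}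
    (hq : IsMinimalPt T q) {U : Set X} (hU : IsOpen U) (hqU : q ∈ U) {K : Set ℕ}
    (hK : ¬DensityZero K) : ∃ i, ¬DensityZero {j ∈ K | T^[j] (T^[i] q) ∈ U} := by
  obtain ⟨g, hg⟩ := hq.syndetic_setOf_iterate_mem hT hU hqU
  by_contra! h
  refine hK ((densityZero_biUnion (Finset.range (g + 1)) fun i _ => h i).mono fun j hj => ?_)
  obtain ⟨k, hkU, hjk, hkg⟩ := hg j
  refine mem_iUnion₂.mpr ⟨k - j, Finset.mem_range.mpr (by omega), hj, ?_⟩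
  rwa [← Function.iterate_add_apply, Nat.add_sub_cancel' hjk]

end MinimalPoints

section PseudoTrajectories

variable [PseudoMetricSpace X] {T : X → X}

lemma IsPseudoTraj.mono {d d' : ℝ} {u : ℕ → X} (h : IsPseudoTraj T d u) (hd : d ≤ d') :
    IsPseudoTraj T d' u :=
  fun k => (h k).trans hd

lemma isClosed_setOf_isPseudoTraj (hT : Continuous T) (d : ℝ) :
    IsClosed {u : ℕ → X | IsPseudoTraj T d u} := by
  simp only [IsPseudoTraj, ofPred_forall]
  exact isClosed_iInter fun k =>
    isClosed_le ((continuous_apply (k + 1)).dist (hT.comp (continuous_apply k))) continuous_const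

lemma isPseudoTraj_zero_of_forall {u : ℕ → X} (h : ∀ n : ℕ, IsPseudoTraj T (1 / (n + 1)) u) :
    IsPseudoTraj T 0 u :=
  fun k => ge_of_tendsto' tendsto_one_div_add_atTop_nhds_zero_nat fun n => h n k

end PseudoTrajectories

lemma IsPseudoTraj.eq_iterate_of_zero [MetricSpace X] {T : X → X} {u : ℕ → X}
    (h : IsPseudoTraj T 0 u) (k : ℕ) : u k = T^[k] (u 0) := by
  induction k with
  | zero => rfl
  | succ k ih => rw [Function.iterate_succ_apply', ← ih, ← dist_le_zero.mp (h k)]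

/-- Otherwise there are `1 / (n + 1)`-pseudotrajectories staying `δ`-away from all minimal points;
a limit of them in the compact space `ℕ → X` is a true orbit staying `δ`-away from the minimal
points in its own orbit closure. -/
lemma exists_pos_forall_isPseudoTraj_near_isMinimalPt [MetricSpace X] [CompactSpace X]
    {T : X → X} (hT : Continuous T) {δ : ℝ} (hδ : 0 < δ) :
    ∃ d > 0, ∀ u : ℕ → X, IsPseudoTraj T d u → ∃ k q, IsMinimalPt T q ∧ dist (u k) q < δ := by
  by_contra! hfar
  let F : ℕ → Set (ℕ → X) := fun n =>
    {u | IsPseudoTraj T (1 / (n + 1)) u} ∩ ⋂ k, ⋂ q, ⋂ (_ : IsMinimalPt T q), {u | δ ≤ dist (u k) q}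
  have hF_closed : ∀ n, IsClosed (F n) := fun n =>
    (isClosed_setOf_isPseudoTraj hT _).inter <| isClosed_iInter fun k => isClosed_iInter fun q =>
      isClosed_iInter fun _ =>
        isClosed_le continuous_const ((continuous_apply k).dist continuous_const)
  have hF_antitone : ∀ n, F (n + 1) ⊆ F n := fun n u ⟨hu, hfar⟩ =>
    ⟨hu.mono (by gcongr; linarith), hfar⟩
  have hF_nonempty : ∀ n, (F n).Nonempty := fun n => by
    obtain ⟨u, hu, hfar⟩ := hfar (1 / (n + 1)) (by positivity)
    exact ⟨u, hu, by simpa using hfar⟩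
  obtain ⟨u, hu⟩ := IsCompact.nonempty_iInter_of_sequence_nonempty_isCompact_isClosed F
    hF_antitone hF_nonempty (hF_closed 0).isCompact hF_closed
  have hu_orbit := (isPseudoTraj_zero_of_forall fun n => (mem_iInter.mp hu n).1).eq_iterate_of_zero
  obtain ⟨m, hm_mem, hm⟩ := exists_isMinimalPt_mem hT isClosed_closure
    ⟨u 0, self_mem_closure_fwdOrbit (u 0)⟩ (mapsTo_closure_fwdOrbit hT (u 0))
  obtain ⟨_, ⟨k, rfl⟩, hkm⟩ := Metric.mem_closure_iff.mp hm_mem δ hδ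
  have hk_far : δ ≤ dist (u k) m := by
    simp only [F, mem_iInter, mem_inter_iff, mem_ofPred_eq] at hu
    exact (hu 0).2 k m hm
  rw [hu_orbit k, dist_comm] at hk_far
  exact hk_far.not_gt hkm

theorem stmt2 [MetricSpace X] [CompactSpace X] (T : X → X) (hT : Continuous T) :
    ∀ ε > (0 : ℝ), ∃ d > (0 : ℝ), ∀ x : ℕ → X, IsPseudoTraj T d x →
      ∃ y : X, IsMinimalPt T y ∧ ∃ K : Set ℕ, K.Infinite ∧
        0 < Filter.limsup (fun N : ℕ => cnt K N / (N : ℝ)) atTop ∧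
        ∀ k ∈ K, dist (x k) (T^[k] y) < ε := by
  intro ε hε
  have hε3 : 0 < ε / 3 := by positivity
  obtain ⟨d, hd, hnear⟩ := exists_pos_forall_isPseudoTraj_near_isMinimalPt hT hε3
  refine ⟨d, hd, fun x hx => ?_⟩
  obtain ⟨u, hu⟩ := exists_forall_nhds_not_densityZero fun j n => x (j + n)
  have hu_mem : u ∈ closure (range fun j n => x (j + n)) := mem_closure_iff_nhds.mpr fun U hU => by
    obtain ⟨j, hj⟩ := (infinite_of_not_densityZero (hu U hU)).nonempty
    exact ⟨_, hj, j, rfl⟩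
  have hu_pseudo : IsPseudoTraj T d u :=
    (isClosed_setOf_isPseudoTraj hT d).closure_subset_iff.mpr
      (by rintro _ ⟨j, rfl⟩ k; exact hx (j + k)) hu_mem
  obtain ⟨k, q, hq, hkq⟩ := hnear u hu_pseudo
  have hvisits : ¬DensityZero {j | dist (x j) (u k) < ε / 3} := fun h =>
    hu _ ((continuous_apply k).continuousAt.preimage_mem_nhds (ball_mem_nhds _ hε3))
      (h.preimage_add k)
  obtain ⟨i, hi⟩ := hq.exists_iterate_not_densityZero hT isOpen_ball
    (mem_ball_self hε3) hvisits
  refine ⟨T^[i] q, hq.iterate i, _, infinite_of_not_densityZero hi,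
    limsup_pos_of_not_densityZero hi, fun j ⟨hxj, hj⟩ => ?_⟩
  calc dist (x j) (T^[j] (T^[i] q))
      ≤ dist (x j) (u k) + dist (u k) q + dist q (T^[j] (T^[i] q)) := dist_triangle4 _ _ _ _
    _ < ε / 3 + ε / 3 + ε / 3 := by
        gcongr
        · exact hxj
        · rw [dist_comm]; exact hj
    _ = ε := by ring
end

section
/- Let X be an arcwise connected compact infinite metric space and T : X → X an invertible map such that the family {T^n : n ∈ ℤ} is equicontinuous. Then there exists ε₀ > 0 such that for every d > 0 there is a two-sided d-pseudotrajectory {x_k}_{k∈ℤ} such that no two-sided subsequence x_{k_n} with k_n → ±∞ can be ε₀-shadowed by the corresponding subsequence T^{k_n}(y) of any exact trajectory. -/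
open Metric Filter Set Topology
open scoped Classical

variable {X : Type*}

/-!
Fix distinct points `a`, `b` and a path `γ` from `a` to `b`. Walking along `γ` in small steps
while following the dynamics, `x_k = T^k (γ (k / N))`, gives a `d`-pseudotrajectory for large `N`,
by uniform equicontinuity of `{T^n}`. It is the orbit of `a` in the past and the orbit of `b` in the
future, so a point `y` shadowing it at times tending to `-∞` and to `+∞` would, after applying the
equally equicontinuous inverse iterates, be close to both `a` and `b`.
-/

theorem Homeomorph.coe_pow [TopologicalSpace X] (T : X ≃ₜ X) (m : ℕ) : ⇑(T ^ m) = (⇑T)^[m] := by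
  induction m with
  | zero => rfl
  | succ m ih => rw [pow_succ, Function.iterate_succ, ← ih]; rfl

theorem zIter_eq_zpow [TopologicalSpace X] (T : X ≃ₜ X) (n : ℤ) : zIter T n = ⇑(T ^ n) := by
  unfold zIter
  split_ifs with hn
  · rw [← Homeomorph.coe_pow, ← zpow_natCast, Int.toNat_of_nonneg hn]
  · rw [← Homeomorph.coe_pow, ← zpow_natCast, Int.toNat_of_nonneg (by omega), ← inv_zpow']
    rfl

theorem Path.exists_nat_dist_extend_succ_div_lt [PseudoMetricSpace X] {a b : X} (γ : Path a b)
    {δ : ℝ} (hδ : 0 < δ) :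
    ∃ N : ℕ, 0 < N ∧ ∀ k : ℤ, dist (γ.extend ((k + 1 : ℤ) / N)) (γ.extend (k / N)) < δ := by
  obtain ⟨η, hη, hγ⟩ := Metric.uniformContinuous_iff.1 γ.uniformContinuous_extend δ hδ
  obtain ⟨N, hN⟩ := exists_nat_gt η⁻¹
  have hNpos : (0 : ℝ) < N := (inv_pos.2 hη).trans hN
  refine ⟨N, Nat.cast_pos.1 hNpos, fun k => hγ ?_⟩
  rw [Real.dist_eq, Int.cast_add, Int.cast_one, ← sub_div, add_sub_cancel_left,
    abs_of_pos (one_div_pos.2 hNpos), div_lt_iff₀ hNpos]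
  rwa [inv_lt_iff_one_lt_mul₀ hη, mul_comm] at hN

theorem Path.eventually_extend_div_eq_source [TopologicalSpace X] {a b : X} (γ : Path a b)
    (N : ℕ) : ∀ᶠ k : ℤ in atBot, γ.extend (k / N) = a :=
  (eventually_le_atBot 0).mono fun _ hk =>
    γ.extend_of_le_zero (div_nonpos_of_nonpos_of_nonneg (by exact_mod_cast hk) N.cast_nonneg)

theorem Path.eventually_extend_div_eq_target [TopologicalSpace X] {a b : X} (γ : Path a b)
    {N : ℕ} (hN : 0 < N) : ∀ᶠ k : ℤ in atTop, γ.extend (k / N) = b :=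
  (eventually_ge_atTop (N : ℤ)).mono fun _ hk =>
    γ.extend_of_one_le <| (one_le_div (by exact_mod_cast hN)).2 (by exact_mod_cast hk)

namespace Homeomorph

variable [PseudoMetricSpace X] {T : X ≃ₜ X}

theorem exists_dist_lt_of_dist_zpow_apply_lt (hT : UniformEquicontinuous fun n : ℤ => ⇑(T ^ n))
    {η : ℝ} (hη : 0 < η) :
    ∃ ε > 0, ∀ (k : ℤ) (x y : X), dist ((T ^ k) x) ((T ^ k) y) < ε → dist x y < η := by
  obtain ⟨ε, hε, hT⟩ := Metric.uniformEquicontinuous_iff.1 hT η hη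
  refine ⟨ε, hε, fun k x y hxy => ?_⟩
  simpa only [zpow_neg, inv_apply, symm_apply_apply] using hT _ _ hxy (-k)

theorem exists_isPseudoTrajZ_zpow_apply (hT : UniformEquicontinuous fun n : ℤ => ⇑(T ^ n))
    {d : ℝ} (hd : 0 < d) :
    ∃ δ > 0, ∀ c : ℤ → X, (∀ k, dist (c (k + 1)) (c k) < δ) →
      IsPseudoTrajZ (⇑T) d fun k => (T ^ k) (c k) := by
  obtain ⟨δ, hδ, hT⟩ := Metric.uniformEquicontinuous_iff.1 hT d hd
  refine ⟨δ, hδ, fun c hc k => ?_⟩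
  have hcomm : T ((T ^ k) (c k)) = (T ^ (k + 1)) (c k) := by
    rw [add_comm, zpow_one_add, mul_apply]
  exact hcomm ▸ (hT _ _ (hc k) (k + 1)).le

theorem not_forall_dist_zpow_apply_lt {a b : X} {ε : ℝ}
    (hε : ∀ (k : ℤ) (x y : X), dist ((T ^ k) x) ((T ^ k) y) < ε → dist x y < dist a b / 2)
    {c : ℤ → X} (hca : ∀ᶠ j in atBot, c j = a) (hcb : ∀ᶠ j in atTop, c j = b)
    (y : X) {k : ℤ → ℤ} (htop : Tendsto k atTop atTop) (hbot : Tendsto k atBot atBot) :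
    ¬ ∀ n, dist ((T ^ k n) (c (k n))) ((T ^ k n) y) < ε := by
  intro hsh
  obtain ⟨n₁, hn₁⟩ := (hbot.eventually hca).exists
  obtain ⟨n₂, hn₂⟩ := (htop.eventually hcb).exists
  have hay := hε _ _ _ (hsh n₁)
  have hby := hε _ _ _ (hsh n₂)
  rw [hn₁] at hay
  rw [hn₂] at hby
  linarith [dist_triangle_right a b y]

end Homeomorph

theorem stmt3 [MetricSpace X] [CompactSpace X] [Infinite X] [PathConnectedSpace X]
    (T : X ≃ₜ X) (heq : Equicontinuous fun n : ℤ => zIter T n) :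
    ∃ ε₀ > (0 : ℝ), ∀ d > (0 : ℝ), ∃ x : ℤ → X, IsPseudoTrajZ (⇑T) d x ∧
      ∀ (y : X) (k : ℤ → ℤ), StrictMono k → Tendsto k atTop atTop → Tendsto k atBot atBot →
        ¬ (∀ n : ℤ, dist (x (k n)) (zIter T (k n) y) < ε₀) := by
  simp_rw [zIter_eq_zpow] at heq ⊢
  have hT := CompactSpace.uniformEquicontinuous_of_equicontinuous heq
  obtain ⟨a, b, hab⟩ := exists_pair_ne X
  obtain ⟨ε₀, hε₀, hsep⟩ :=
    Homeomorph.exists_dist_lt_of_dist_zpow_apply_lt hT (half_pos (dist_pos.2 hab))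
  refine ⟨ε₀, hε₀, fun d hd => ?_⟩
  obtain ⟨δ, hδ, hpseudo⟩ := Homeomorph.exists_isPseudoTrajZ_zpow_apply hT hd
  let γ : Path a b := PathConnectedSpace.somePath a b
  obtain ⟨N, hN, hstep⟩ := γ.exists_nat_dist_extend_succ_div_lt hδ
  refine ⟨_, hpseudo (fun k => γ.extend (k / N)) hstep, fun y k _ htop hbot => ?_⟩
  exact Homeomorph.not_forall_dist_zpow_apply_lt hsep (γ.eventually_extend_div_eq_source N)
    (γ.eventually_extend_div_eq_target hN) y htop hbot
end

section
/- Let T be a homeomorphism of a compact metric space X. If (X,T) is minimal, then for every ε > 0 there exists a finite set N ⊆ X such that T^n(N) is an ε-network in X for every n ∈ ℤ. -/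
open Metric Filter Set Topology
open scoped Classical

variable {X : Type*}

/-! By compactness and density of forward orbits, every `ε/2`-ball is reached from every point
within a uniform number `K` of steps, so the first `K + 1` points of every orbit form an
`ε`-network. Since `zIter T n` commutes with `T`, it maps the first `K + 1` points of the orbit
of `x₀` to those of the orbit of `zIter T n x₀`. -/

theorem exists_bound_forall_exists_iterate_mem [TopologicalSpace X] [CompactSpace X] {f : X → X}
    (hf : Continuous f) {U : Set X} (hU : IsOpen U)
    (h : ∀ x, ∃ n, f^[n] x ∈ U) : ∃ K, ∀ x, ∃ n ≤ K, f^[n] x ∈ U := by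
  obtain ⟨s, hs⟩ := isCompact_univ.elim_finite_subcover (fun n => f^[n] ⁻¹' U)
    (fun n => hU.preimage (hf.iterate n)) fun x _ => mem_iUnion.2 (h x)
  refine ⟨s.sup id, fun x => ?_⟩
  obtain ⟨n, hn, hx⟩ := mem_iUnion₂.1 (hs (mem_univ x))
  exact ⟨n, s.le_sup (f := id) hn, hx⟩

theorem exists_bound_forall_dist_iterate_le [PseudoMetricSpace X] [CompactSpace X] {f : X → X}
    (hf : Continuous f) (hdense : ∀ x, Dense (fwdOrbit f x)) {ε : ℝ} (hε : 0 < ε) :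
    ∃ K, ∀ x y, ∃ n ≤ K, dist y (f^[n] x) ≤ ε := by
  have hball (c : X) : ∃ K, ∀ x, ∃ n ≤ K, f^[n] x ∈ ball c (ε / 2) := by
    refine exists_bound_forall_exists_iterate_mem hf isOpen_ball fun x => ?_
    obtain ⟨_, hz, n, rfl⟩ := (hdense x).inter_open_nonempty _ isOpen_ball
      ⟨c, mem_ball_self (half_pos hε)⟩
    exact ⟨n, hz⟩
  choose K hK using hball
  obtain ⟨s, hs⟩ := isCompact_univ.elim_finite_subcover (fun c : X => ball c (ε / 2))
    (fun _ => isOpen_ball) fun y _ => mem_iUnion.2 ⟨y, mem_ball_self (half_pos hε)⟩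
  refine ⟨s.sup K, fun x y => ?_⟩
  obtain ⟨c, hc, hy⟩ := mem_iUnion₂.1 (hs (mem_univ y))
  obtain ⟨n, hn, hx⟩ := hK c x
  refine ⟨n, hn.trans (s.le_sup hc), ?_⟩
  calc dist y (f^[n] x) ≤ dist y c + dist (f^[n] x) c := dist_triangle_right _ _ _
    _ ≤ ε / 2 + ε / 2 := add_le_add (mem_ball.1 hy).le (mem_ball.1 hx).le
    _ = ε := add_halves ε

theorem commute_zIter [TopologicalSpace X] (T : X ≃ₜ X) (n : ℤ) :
    Function.Commute (zIter T n) T := by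
  unfold zIter
  split
  · exact Function.Commute.iterate_self _ _
  · exact Function.Commute.iterate_left (fun x => by simp) _

theorem stmt4 [MetricSpace X] [CompactSpace X] (T : X ≃ₜ X)
    (hmin : ∀ x : X, Dense (fwdOrbit (⇑T) x)) :
    ∀ ε > (0 : ℝ), ∃ N : Finset X, ∀ n : ℤ, IsNet ε (zIter T n '' (N : Set X)) := by
  intro ε hε
  rcases isEmpty_or_nonempty X with _ | ⟨⟨x₀⟩⟩
  · exact ⟨∅, fun _ x => isEmptyElim x⟩
  obtain ⟨K, hK⟩ := exists_bound_forall_dist_iterate_le T.continuous hmin hε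
  refine ⟨(Finset.range (K + 1)).image fun k => (⇑T)^[k] x₀, fun n x => ?_⟩
  obtain ⟨k, hk, hx⟩ := hK (zIter T n x₀) x
  refine ⟨_, mem_image_of_mem _ ?_, ((commute_zIter T n).iterate_right k x₀).symm ▸ hx⟩
  simpa using ⟨k, hk, rfl⟩
end

section
/- Let T be a homeomorphism of a compact metric space X with the multishadowing property. Then for every ε > 0 the chain recurrent set CR(X,T) admits a finite set A ⊆ CR(X,T) such that CR(X,T) ⊆ U_{2ε}(T^m(A)) for every m ∈ ℤ. -/
open Metric Filter Set Topology
open scoped Classical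

variable {X : Type*}

section AuxStmt8

variable [MetricSpace X]

lemma zIter_coe_aux (T : X ≃ₜ X) (n : ℤ) : zIter T n = ⇑(T.toEquiv ^ n) := by
  cases n with
  | ofNat m =>
    simp [zIter, zpow_natCast, Equiv.Perm.coe_pow]
  | negSucc m =>
    have h1 : ¬ (0 : ℤ) ≤ Int.negSucc m := not_le.mpr (Int.negSucc_lt_zero m)
    simp only [zIter, h1, if_false]
    have h2 : (-(Int.negSucc m)).toNat = m + 1 := by
      simp [Int.negSucc_eq]
    rw [h2, zpow_negSucc, ← inv_pow, Equiv.Perm.coe_pow]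
    congr 1

lemma zIter_add_aux (T : X ≃ₜ X) (a b : ℤ) :
    zIter T (a + b) = zIter T a ∘ zIter T b := by
  simp only [zIter_coe_aux, zpow_add, Equiv.Perm.coe_mul]

lemma zIter_zero_aux (T : X ≃ₜ X) : zIter T 0 = id := by simp [zIter]

lemma zIter_one_aux (T : X ≃ₜ X) : zIter T 1 = ⇑T := by simp [zIter]

lemma zIter_neg_one_aux (T : X ≃ₜ X) : zIter T (-1) = ⇑T.symm := by
  have : ¬ (0:ℤ) ≤ -1 := by decide
  simp [zIter, this]

lemma zIter_continuous_aux (T : X ≃ₜ X) (n : ℤ) : Continuous (zIter T n) := by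
  unfold zIter
  split_ifs
  · exact T.continuous.iterate _
  · exact T.symm.continuous.iterate _

lemma zIter_succ_aux (T : X ≃ₜ X) (t : ℤ) (y : X) :
    zIter T (t + 1) y = T (zIter T t y) := by
  have h : zIter T (t + 1) = zIter T 1 ∘ zIter T t := by
    rw [← zIter_add_aux]; ring_nf
  rw [h, zIter_one_aux]; rfl

lemma zIter_pred_aux (T : X ≃ₜ X) (t : ℤ) (y : X) :
    zIter T (t - 1) y = T.symm (zIter T t y) := by
  have h : zIter T (t - 1) = zIter T (-1) ∘ zIter T t := by
    rw [← zIter_add_aux]; ring_nf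
  rw [h, zIter_neg_one_aux]; rfl

variable [CompactSpace X]

lemma unif_cont_le_aux {f : X → X} (hf : Continuous f)
    {d : ℝ} (hd : 0 < d) : ∃ δ > (0:ℝ), δ ≤ d ∧
      ∀ a b : X, dist a b ≤ δ → dist (f a) (f b) ≤ d := by
  have huc := CompactSpace.uniformContinuous_of_continuous hf
  obtain ⟨δ, hδ, hδ2⟩ := Metric.uniformContinuous_iff.mp huc d hd
  refine ⟨min (δ/2) d, by positivity, min_le_right _ _, fun a b hab => ?_⟩
  have : dist a b < δ := by
    have := min_le_left (δ/2) d
    linarith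
  exact (hδ2 this).le

lemma chainRec_apply_aux (T : X ≃ₜ X) {x : X}
    (hx : ChainRec (⇑T) x) : ChainRec (⇑T) (T x) := by
  intro d hd
  obtain ⟨δ, hδ0, hδd, hδ⟩ := unif_cont_le_aux T.continuous hd
  obtain ⟨n, hn, c, h0, hn', hj⟩ := hx δ hδ0
  exact ⟨n, hn, fun k => T (c k), by simp [h0], by simp [hn'],
    fun k hk => hδ _ _ (hj k hk)⟩

lemma chainRec_symm_apply_aux (T : X ≃ₜ X) {x : X}
    (hx : ChainRec (⇑T) x) : ChainRec (⇑T) (T.symm x) := by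
  intro d hd
  obtain ⟨δ, hδ0, hδd, hδ⟩ := unif_cont_le_aux T.symm.continuous hd
  obtain ⟨n, hn, c, h0, hn', hj⟩ := hx δ hδ0
  refine ⟨n, hn, fun k => T.symm (c k), by simp [h0], by simp [hn'], fun k hk => ?_⟩
  have := hδ _ _ (hj k hk)
  simpa using this

lemma chainRec_zIter_aux (T : X ≃ₜ X) {x : X}
    (hx : ChainRec (⇑T) x) (s : ℤ) : ChainRec (⇑T) (zIter T s x) := by
  induction s using Int.induction_on with
  | zero => rw [zIter_zero_aux]; exact hx
  | succ k ih => rw [zIter_succ_aux]; exact chainRec_apply_aux T ih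
  | pred k ih => rw [zIter_pred_aux]; exact chainRec_symm_apply_aux T ih

lemma chainRec_of_limit_aux (T : X ≃ₜ X) (y z : X)
    (hlim : ∀ δ > (0:ℝ), ∃ t1 t2 : ℤ, t1 + 2 ≤ t2 ∧
      dist (zIter T t1 y) z ≤ δ ∧ dist (zIter T t2 y) z ≤ δ) :
    ChainRec (⇑T) z := by
  intro d hd
  obtain ⟨δ, hδ0, hδd, hδ⟩ := unif_cont_le_aux T.continuous hd
  obtain ⟨t1, t2, ht, h1, h2⟩ := hlim δ hδ0
  set n : ℕ := (t2 - t1).toNat with hn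
  have hn2 : 2 ≤ n := by omega
  have hnt : (n : ℤ) = t2 - t1 := by omega
  refine ⟨n, by omega, fun k => if k = 0 ∨ k = n then z else zIter T (t1 + k) y,
    by simp, by simp, fun k hk => ?_⟩
  beta_reduce
  rcases eq_or_ne k 0 with rfl | hk0
  · rw [if_pos (Or.inl rfl), if_neg (by omega : ¬((0:ℕ)+1 = 0 ∨ 0+1 = n))]
    have e : zIter T (t1 + ((0:ℕ)+1 : ℕ)) y = T (zIter T t1 y) := by
      push_cast; rw [zIter_succ_aux]
    rw [e]
    exact hδ _ _ h1
  · rw [if_neg (by omega : ¬(k = 0 ∨ k = n))]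
    rcases eq_or_ne (k+1) n with hk1 | hk1
    · rw [if_pos (Or.inr hk1)]
      have e : T (zIter T (t1 + k) y) = zIter T t2 y := by
        rw [← zIter_succ_aux]
        congr 1
        omega
      rw [e, dist_comm]
      linarith
    · rw [if_neg (by omega : ¬(k+1 = 0 ∨ k+1 = n))]
      have e : zIter T (t1 + ((k:ℕ)+1:ℕ)) y = T (zIter T (t1 + k) y) := by
        push_cast
        rw [show t1 + ((k:ℤ)+1) = (t1 + k) + 1 by ring, zIter_succ_aux]
      rw [e]
      simp
      linarith

lemma key_aux (T : X ≃ₜ X) {ε d : ℝ} (hε : 0 < ε)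
    (hd : 0 < d)
    (hsh : ∀ x : ℤ → X, IsPseudoTrajZ (⇑T) d x →
      ∃ Y : Finset X, ∀ k : ℤ, ∃ y ∈ Y, dist (x k) (zIter T k y) < ε)
    {p : X} (hp : ChainRec (⇑T) p) :
    ∃ B : Finset X, (↑B ⊆ {x : X | ChainRec (⇑T) x}) ∧
      ∀ m : ℤ, ∃ a ∈ B, dist p (zIter T m a) ≤ ε := by
  obtain ⟨n, hn1, c, hc0, hcn, hcj⟩ := hp d hd
  have hnZ : (0:ℤ) < (n:ℤ) := by exact_mod_cast hn1
  set ξ : ℤ → X := fun k => c ((k % (n:ℤ)).toNat) with hξdef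
  have hξper : ∀ (k j : ℤ), ξ (k + (n:ℤ) * j) = ξ k := by
    intro k j
    simp only [hξdef]
    rw [Int.add_mul_emod_self_left]
  have hξ0 : ∀ t : ℤ, t % (n:ℤ) = 0 → ξ t = p := by
    intro t ht
    simp only [hξdef]
    rw [ht]
    simpa using hc0
  have hξtraj : IsPseudoTrajZ (⇑T) d ξ := by
    intro k
    have hr0 : 0 ≤ k % (n:ℤ) := Int.emod_nonneg k (by omega)
    set r : ℕ := (k % (n:ℤ)).toNat with hrdef
    have hr : (k % (n:ℤ)) = (r:ℤ) := (Int.toNat_of_nonneg hr0).symm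
    have hrn : r < n := by
      have := Int.emod_lt_of_pos k hnZ; omega
    have hmod : (k+1) % (n:ℤ) = ((r:ℤ)+1) % (n:ℤ) := by
      rw [← Int.emod_add_emod, hr]
    by_cases hcase : r + 1 = n
    · have h0 : ((r:ℤ)+1) % (n:ℤ) = 0 := by
        rw [show ((r:ℤ)+1) = (n:ℤ) by exact_mod_cast hcase, Int.emod_self]
      have e1 : ξ (k+1) = c n := by
        simp only [hξdef]; rw [hmod, h0]; simp [hc0, hcn]
      have e2 : ξ k = c r := by simp only [hξdef]; rfl
      rw [e1, e2, ← hcase]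
      exact hcj r hrn
    · have h0 : ((r:ℤ)+1) % (n:ℤ) = ((r:ℤ)+1) := Int.emod_eq_of_lt (by omega) (by omega)
      have e1 : ξ (k+1) = c (r+1) := by
        simp only [hξdef]; rw [hmod, h0]
        norm_num
      have e2 : ξ k = c r := by simp only [hξdef]; rfl
      rw [e1, e2]
      exact hcj r hrn
  obtain ⟨Y, hY⟩ := hsh ξ hξtraj
  set ι := {y : X // y ∈ Y}
  set u : ℕ → (ι → X) := fun j l => zIter T ((n:ℤ) * j) l.1 with hudef
  obtain ⟨g, -, φ, hφ, hg⟩ := IsCompact.tendsto_subseq (isCompact_univ (X := ι → X))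
    (fun j => Set.mem_univ (u j))
  have hgl : ∀ l : ι, Tendsto (fun j => zIter T ((n:ℤ) * (φ j : ℤ)) l.1) atTop (𝓝 (g l)) := by
    intro l
    exact tendsto_pi_nhds.mp hg l
  have hCR : ∀ l : ι, ChainRec (⇑T) (g l) := by
    intro l
    apply chainRec_of_limit_aux T l.1
    intro δ hδ
    obtain ⟨N, hN⟩ := Metric.tendsto_atTop.mp (hgl l) δ hδ
    refine ⟨(n:ℤ) * φ N, (n:ℤ) * φ (N+2), ?_, (hN N le_rfl).le, (hN (N+2) (by omega)).le⟩
    have hφ2 : φ N + 2 ≤ φ (N + 2) := by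
      have a1 := hφ (show N < N+1 by omega)
      have a2 := hφ (show N+1 < N+2 by omega)
      omega
    have h1 : (n:ℤ) * (φ N + 2 : ℕ) ≤ (n:ℤ) * (φ (N+2) : ℕ) := by
      apply mul_le_mul_of_nonneg_left _ (by omega)
      exact_mod_cast hφ2
    push_cast at h1
    have h2 : (2:ℤ) ≤ (n:ℤ) * 2 := by omega
    nlinarith
  have htrg : ∀ k : ℤ, ∃ l : ι, dist (ξ k) (zIter T k (g l)) ≤ ε := by
    intro k
    have hstep : ∀ j : ℕ, ∃ l : ι, dist (ξ k) (zIter T k (u (φ j) l)) < ε := by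
      intro j
      obtain ⟨y, hy, hdy⟩ := hY (k + (n:ℤ) * (φ j : ℤ))
      refine ⟨⟨y, hy⟩, ?_⟩
      rw [hξper k _] at hdy
      rw [zIter_add_aux] at hdy
      exact hdy
    choose ψ hψ using hstep
    obtain ⟨l, hl⟩ := Finite.exists_infinite_fiber ψ
    have hinf : (ψ ⁻¹' {l} : Set ℕ).Infinite := Set.infinite_coe_iff.mp hl
    refine ⟨l, ?_⟩
    have h1 : Tendsto (fun j => zIter T k (u (φ j) l)) atTop (𝓝 (zIter T k (g l))) :=
      ((zIter_continuous_aux T k).continuousAt.tendsto).comp (hgl l)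
    have hc : Tendsto (fun j => dist (ξ k) (zIter T k (u (φ j) l))) atTop
        (𝓝 (dist (ξ k) (zIter T k (g l)))) := tendsto_const_nhds.dist h1
    by_contra hgt
    push_neg at hgt
    have hev := hc.eventually (eventually_gt_nhds hgt)
    obtain ⟨N, hN⟩ := eventually_atTop.mp hev
    obtain ⟨j, hjmem, hjN⟩ := hinf.exists_gt N
    have hj1 := hψ j
    have hjl : ψ j = l := hjmem
    rw [hjl] at hj1
    have := hN j hjN.le
    linarith
  set Z : Finset X := Finset.univ.image g with hZdef
  refine ⟨(Finset.range n).biUnion (fun s => Z.image (fun z => zIter T (s:ℤ) z)), ?_, ?_⟩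
  · intro a ha
    simp only [Finset.coe_biUnion, Finset.coe_image, Set.mem_iUnion, Finset.mem_coe,
      Finset.mem_range, Set.mem_image, hZdef, Finset.coe_image, Finset.coe_univ,
      Set.image_univ, Set.mem_range] at ha
    obtain ⟨s, hs, z, ⟨l, rfl⟩, rfl⟩ := ha
    exact chainRec_zIter_aux T (hCR l) _
  · intro m
    set s : ℤ := (-m) % (n:ℤ) with hsdef
    have hs0 : 0 ≤ s := Int.emod_nonneg _ (by omega)
    have hsn : s < n := Int.emod_lt_of_pos _ hnZ
    have ht0 : (m + s) % (n:ℤ) = 0 := by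
      have e : m + s = (n:ℤ) * (-((-m)/(n:ℤ))) := by
        rw [hsdef, Int.emod_def]; ring
      rw [e, Int.mul_emod_right]
    obtain ⟨l, hl⟩ := htrg (m + s)
    rw [hξ0 _ ht0] at hl
    refine ⟨zIter T s (g l), ?_, ?_⟩
    · apply Finset.mem_biUnion.mpr
      refine ⟨s.toNat, Finset.mem_range.mpr (by omega), ?_⟩
      apply Finset.mem_image.mpr
      refine ⟨g l, by simp [hZdef], ?_⟩
      rw [Int.toNat_of_nonneg hs0]
    · rw [show zIter T m (zIter T s (g l)) = zIter T (m + s) (g l) by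
        rw [zIter_add_aux]; rfl]
      exact hl

end AuxStmt8

theorem stmt8 [MetricSpace X] [CompactSpace X] (T : X ≃ₜ X)
    (h : Multishadowing T) :
    ∀ ε > (0 : ℝ), ∃ A : Finset X, (A : Set X) ⊆ {x : X | ChainRec (⇑T) x} ∧
      ∀ m : ℤ, {x : X | ChainRec (⇑T) x} ⊆
        Metric.thickening (2 * ε) (zIter T m '' (A : Set X)) := by
  intro ε hε
  obtain ⟨d, hd0, hsh⟩ := h ε hε
  have htb : TotallyBounded {x : X | ChainRec (⇑T) x} :=
    isCompact_univ.totallyBounded.subset (Set.subset_univ _)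
  obtain ⟨F, hFsub, hFfin, hFcov⟩ := totallyBounded_iff_subset.mp htb
    _ (Metric.dist_mem_uniformity (half_pos hε))
  have hkey : ∀ p ∈ F, ∃ B : Finset X, (↑B ⊆ {x : X | ChainRec (⇑T) x}) ∧
      ∀ m : ℤ, ∃ a ∈ B, dist p (zIter T m a) ≤ ε :=
    fun p hp => key_aux T hε hd0 hsh (hFsub hp)
  choose! B hB1 hB2 using hkey
  refine ⟨hFfin.toFinset.biUnion B, ?_, ?_⟩
  · intro a ha
    simp only [Finset.coe_biUnion, Set.mem_iUnion, Finset.mem_coe,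
      Set.Finite.mem_toFinset] at ha
    obtain ⟨p, hp, hap⟩ := ha
    exact hB1 p hp hap
  · intro m x hx
    have := hFcov hx
    simp only [Set.mem_iUnion] at this
    obtain ⟨p, hp, hxp⟩ := this
    have hxp' : dist x p < ε / 2 := hxp
    obtain ⟨a, haB, hda⟩ := hB2 p hp m
    rw [Metric.mem_thickening_iff]
    refine ⟨zIter T m a, ⟨a, ?_, rfl⟩, ?_⟩
    · simp only [Finset.coe_biUnion, Set.mem_iUnion, Finset.mem_coe,
        Set.Finite.mem_toFinset]
      exact ⟨p, hp, haB⟩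
    · have htri := dist_triangle x p (zIter T m a)
      linarith
end

section
/- Let T be a homeomorphism of a compact metric space X. If the chain recurrent set equals the closure of the set of minimal points, CR(X,T) = closure(M(X,T)), then (X,T) has the multishadowing property: for every ε > 0 there exists d > 0 such that every two-sided d-pseudotrajectory is ε-traced by finitely many exact trajectories. -/
open Metric Filter Set Topology
open scoped Classical

variable {X : Type*}

/-!
A `d`-pseudotrajectory can stay away from a neighbourhood `U` of the chain recurrent set only
finitely often: otherwise two of those visits lie close to a common cluster point `p ∉ U`, and the
segment of the pseudotrajectory between them closes up into an `e`-chain from `p` to itself,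
while by compactness all points admitting closed `e`-chains lie in `U` once `e` is small.
At those finitely many times the pseudotrajectory is traced by the exact orbit through the point
itself. At all other times it is near one of finitely many minimal points `y`; since a minimal
point returns near itself with bounded gaps, also backwards in time, the orbits of `T^j y` with
`j` bounded trace it there.
-/

namespace Homeomorph

variable [TopologicalSpace X] (T : X ≃ₜ X)

theorem coe_pow_eq_iterate (n : ℕ) : ⇑(T ^ n) = (⇑T)^[n] := by
  induction n with
  | zero => rfl
  | succ n ih => rw [pow_succ', Function.iterate_succ', ← ih]; rfl

end Homeomorph

theorem zIter_eq_coe_zpow [TopologicalSpace X] (T : X ≃ₜ X) (k : ℤ) : zIter T k = ⇑(T ^ k) := by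
  obtain ⟨n, rfl | rfl⟩ := k.eq_nat_or_neg
  · simp [zIter, Homeomorph.coe_pow_eq_iterate]
  · rcases n.eq_zero_or_pos with rfl | hn
    · simp only [zIter, CharP.cast_eq_zero, neg_zero, le_refl, if_true, zpow_zero]
      rfl
    · rw [zpow_neg, zpow_natCast, ← inv_pow, Homeomorph.coe_pow_eq_iterate]
      simp only [zIter, Int.neg_nonneg, Int.natCast_nonpos_iff, hn.ne', ↓reduceIte, neg_neg,
        Int.toNat_natCast]
      rfl

theorem image_fwdOrbit (f : X → X) (x : X) : f '' fwdOrbit f x = fwdOrbit f (f x) := by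
  rw [fwdOrbit, fwdOrbit, ← Set.range_comp]
  congr 1
  funext k
  exact (Function.iterate_succ_apply' f k x).symm.trans (Function.iterate_succ_apply f k x)

section Minimal

variable [TopologicalSpace X] {T : X ≃ₜ X} {m : X}

theorem IsMinimalPt.image_closure_fwdOrbit (hm : IsMinimalPt T m) :
    T '' closure (fwdOrbit T m) = closure (fwdOrbit T m) := by
  rw [T.image_closure, image_fwdOrbit]
  exact hm (T m) (subset_closure ⟨1, rfl⟩)

theorem IsMinimalPt.zpow_apply_mem_closure_fwdOrbit (hm : IsMinimalPt T m) (k : ℤ) :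
    (T ^ k) m ∈ closure (fwdOrbit T m) := by
  have hinv := hm.image_closure_fwdOrbit
  induction k with
  | zero => exact subset_closure ⟨0, rfl⟩
  | succ k ih =>
    rw [add_comm, zpow_one_add, Homeomorph.mul_apply, ← hinv]
    exact mem_image_of_mem T ih
  | pred k ih =>
    rw [sub_eq_neg_add, zpow_add, zpow_neg_one, Homeomorph.mul_apply, Homeomorph.inv_apply]
    rw [← hinv] at ih
    obtain ⟨z, hz, hzk⟩ := ih
    rwa [← hzk, T.symm_apply_apply]

end Minimal

theorem IsMinimalPt.exists_finset_forall_dist_zpow_lt [PseudoMetricSpace X] [CompactSpace X]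
    {T : X ≃ₜ X} {m : X} (hm : IsMinimalPt T m) {r : ℝ} (hr : 0 < r) :
    ∃ F : Finset X, ∀ k : ℤ, ∃ z ∈ F, dist ((T ^ k) z) m < r := by
  have hcover : closure (fwdOrbit T m) ⊆ ⋃ j : ℕ, ⇑(T ^ j) ⁻¹' ball m r := by
    intro z hz
    have hmz : m ∈ closure (fwdOrbit T z) := (hm z hz).symm ▸ subset_closure ⟨0, rfl⟩
    obtain ⟨_, ⟨j, rfl⟩, hj⟩ := Metric.mem_closure_iff.mp hmz r hr
    refine mem_iUnion.mpr ⟨j, ?_⟩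
    rw [mem_preimage, Homeomorph.coe_pow_eq_iterate, mem_ball, dist_comm]
    exact hj
  obtain ⟨J, hJ⟩ := isClosed_closure.isCompact.elim_finite_subcover _
    (fun j => isOpen_ball.preimage (T ^ j).continuous) hcover
  refine ⟨J.image fun j => (T ^ j) m, fun k => ?_⟩
  obtain ⟨j, hjJ, hj⟩ := mem_iUnion₂.mp (hJ (hm.zpow_apply_mem_closure_fwdOrbit k))
  refine ⟨(T ^ j) m, Finset.mem_image_of_mem _ hjJ, ?_⟩
  rw [← Homeomorph.mul_apply, ← zpow_natCast, zpow_mul_comm, zpow_natCast, Homeomorph.mul_apply]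
  exact hj

/-- `ChainRec T x` unfolds to `∀ e > 0, HasClosedChain T e x`. -/
def HasClosedChain [PseudoMetricSpace X] (T : X → X) (e : ℝ) (x : X) : Prop :=
  ∃ n : ℕ, 1 ≤ n ∧ ∃ c : ℕ → X, c 0 = x ∧ c n = x ∧ ∀ k < n, dist (c (k + 1)) (T (c k)) ≤ e

section Chains

variable [PseudoMetricSpace X] {T : X → X}

theorem HasClosedChain.mono {e e' : ℝ} {x : X} (h : HasClosedChain T e x) (hee' : e ≤ e') :
    HasClosedChain T e' x :=
  let ⟨n, hn, c, h0, hn', hc⟩ := h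
  ⟨n, hn, c, h0, hn', fun k hk => (hc k hk).trans hee'⟩

theorem hasClosedChain_of_chain_near {e δ δ' : ℝ} {p : X} {c : ℕ → X} {n : ℕ} (hn : 1 ≤ n)
    (hc : ∀ k < n, dist (c (k + 1)) (T (c k)) ≤ e) (h0 : dist p (c 0) ≤ δ)
    (hn' : dist p (c n) ≤ δ) (hT : dist (T p) (T (c 0)) ≤ δ') :
    HasClosedChain T (e + δ + δ') p := by
  set c' : ℕ → X := fun k => if k = 0 ∨ k = n then p else c k
  have hnear : ∀ k, dist (c' k) (c k) ≤ δ := by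
    intro k
    simp only [c']
    split_ifs with hk
    · rcases hk with rfl | rfl <;> assumption
    · simpa using dist_nonneg.trans h0
  have hnearT : ∀ k < n, dist (T (c k)) (T (c' k)) ≤ δ' := by
    intro k hk
    simp only [c']
    split_ifs with hk'
    · obtain rfl | rfl := hk'
      · rwa [dist_comm]
      · omega
    · simpa using dist_nonneg.trans hT
  refine ⟨n, hn, c', by simp [c'], by simp [c'], fun k hk => ?_⟩
  calc dist (c' (k + 1)) (T (c' k))
      ≤ dist (c' (k + 1)) (c (k + 1)) + dist (c (k + 1)) (T (c k)) + dist (T (c k)) (T (c' k)) :=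
        dist_triangle4 _ _ _ _
    _ ≤ δ + e + δ' := by gcongr; exacts [hnear _, hc k hk, hnearT k hk]
    _ = e + δ + δ' := by ring

theorem IsPseudoTrajZ.hasClosedChain_of_dist_le {d δ δ' : ℝ} {x : ℤ → X}
    (hx : IsPseudoTrajZ T d x) {s t : ℤ} (hst : s < t) {p : X} (hs : dist p (x s) ≤ δ)
    (ht : dist p (x t) ≤ δ) (hT : dist (T p) (T (x s)) ≤ δ') :
    HasClosedChain T (d + δ + δ') p := by
  have hts : s + ((t - s).toNat : ℤ) = t := by omega
  refine hasClosedChain_of_chain_near (c := fun i : ℕ => x (s + i)) (n := (t - s).toNat)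
    (by omega) (fun k _ => ?_) (by simpa) (by rwa [hts]) (by simpa)
  simpa [add_assoc] using hx (s + k)

theorem hasClosedChain_of_mem_closure {e e' : ℝ} (hee' : e < e') {p : X} (hT : ContinuousAt T p)
    (hp : p ∈ closure {x | HasClosedChain T e x}) : HasClosedChain T e' p := by
  set η := (e' - e) / 2
  have hη : 0 < η := by simp only [η]; linarith
  obtain ⟨δ, hδ, hTδ⟩ := Metric.continuousAt_iff.mp hT η hη
  obtain ⟨q, ⟨n, hn, c, rfl, hcn, hc⟩, hpq⟩ :=
    Metric.mem_closure_iff.mp hp (min δ η) (by positivity)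
  have hTq : dist (T p) (T (c 0)) ≤ η := by
    rw [dist_comm]
    exact (hTδ (by rw [dist_comm]; exact hpq.trans_le (min_le_left _ _))).le
  have hpq' : dist p (c 0) ≤ η := (hpq.trans_le (min_le_right _ _)).le
  exact (hasClosedChain_of_chain_near hn hc hpq' (hcn ▸ hpq') hTq).mono (by simp only [η]; linarith)

variable [CompactSpace X]

theorem exists_hasClosedChain_subset (hT : Continuous T) {U : Set X} (hU : IsOpen U)
    (hCR : {x | ChainRec T x} ⊆ U) : ∃ e > 0, {x | HasClosedChain T e x} ⊆ U := by
  set V : ℕ → Set X := fun n => closure {x | HasClosedChain T (1 / (n + 1)) x}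
  have hV : Antitone V := fun n m hnm =>
    closure_mono fun x hx => HasClosedChain.mono hx (Nat.one_div_le_one_div hnm)
  have hInter : ∀ p ∈ ⋂ n, V n, ChainRec T p := fun p hp e he =>
    let ⟨N, hN⟩ := exists_nat_one_div_lt he
    hasClosedChain_of_mem_closure hN hT.continuousAt (mem_iInter.mp hp N)
  obtain ⟨n, hn⟩ := exists_subset_nhds_of_isCompact' hV.directed_ge
    (fun _ => isClosed_closure.isCompact) (fun _ => isClosed_closure)
    fun p hp => hU.mem_nhds (hCR (hInter p hp))
  exact ⟨1 / (n + 1), Nat.one_div_pos_of_nat, subset_closure.trans hn⟩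

theorem exists_forall_isPseudoTrajZ_eventually_mem (hT : Continuous T) {U : Set X}
    (hU : IsOpen U) (hCR : {x | ChainRec T x} ⊆ U) :
    ∃ d > 0, ∀ x : ℤ → X, IsPseudoTrajZ T d x → ∀ᶠ k in cofinite, x k ∈ U := by
  obtain ⟨e, he, heU⟩ := exists_hasClosedChain_subset hT hU hCR
  refine ⟨e / 3, by positivity, fun x hx => ?_⟩
  by_contra hfreq
  rw [not_eventually] at hfreq
  obtain ⟨p, hpU, hp⟩ := hU.isClosed_compl.isCompact.exists_mapClusterPt_of_frequently hfreq
  obtain ⟨δ, hδ, hTδ⟩ := Metric.continuousAt_iff.mp hT.continuousAt (e / 3) (by positivity)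
  have hinf : {k | x k ∈ ball p (min δ (e / 3))}.Infinite :=
    frequently_cofinite_iff_infinite.mp
      (mapClusterPt_iff_frequently.mp hp _ (ball_mem_nhds p (by positivity)))
  obtain ⟨s, hs, t, ht, hst⟩ := hinf.nontrivial.exists_lt
  rw [mem_ofPred_eq, mem_ball'] at hs ht
  have hTs : dist (T p) (T (x s)) ≤ e / 3 := by
    rw [dist_comm]
    exact (hTδ (by rw [dist_comm]; exact hs.trans_le (min_le_left _ _))).le
  have hchain := hx.hasClosedChain_of_dist_le hst (hs.trans_le (min_le_right _ _)).le
    (ht.trans_le (min_le_right _ _)).le hTs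
  exact hpU (heU (hchain.mono (by linarith)))

end Chains

theorem stmt10 [MetricSpace X] [CompactSpace X] (T : X ≃ₜ X)
    (h : {x : X | ChainRec (⇑T) x} = closure {y : X | IsMinimalPt (⇑T) y}) :
    Multishadowing T := by
  intro ε hε
  have hcover : {x | ChainRec T x} ⊆ ⋃ y : {y // IsMinimalPt T y}, ball (y : X) (ε / 2) := by
    rw [h]
    intro p hp
    obtain ⟨y, hy, hpy⟩ := Metric.mem_closure_iff.mp hp (ε / 2) (half_pos hε)
    exact mem_iUnion.mpr ⟨⟨y, hy⟩, mem_ball.mpr hpy⟩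
  obtain ⟨G, hG⟩ := (h ▸ isClosed_closure.isCompact : IsCompact {x | ChainRec T x})
    |>.elim_finite_subcover _ (fun _ => isOpen_ball) hcover
  choose F hF using fun y : {y // IsMinimalPt T y} =>
    y.2.exists_finset_forall_dist_zpow_lt (half_pos hε)
  obtain ⟨d, hd, hU⟩ := exists_forall_isPseudoTrajZ_eventually_mem T.continuous
    (isOpen_biUnion fun _ _ => isOpen_ball) hG
  refine ⟨d, hd, fun x hx => ?_⟩
  have hfar := eventually_cofinite.mp (hU x hx)
  refine ⟨hfar.toFinset.image (fun k => (T ^ (-k)) (x k)) ∪ G.biUnion F, fun k => ?_⟩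
  rw [zIter_eq_coe_zpow]
  by_cases hk : x k ∈ ⋃ y ∈ G, ball (y : X) (ε / 2)
  · obtain ⟨y, hyG, hky⟩ := mem_iUnion₂.mp hk
    obtain ⟨z, hzF, hz⟩ := hF y k
    refine ⟨z, Finset.mem_union_right _ (Finset.mem_biUnion.mpr ⟨y, hyG, hzF⟩), ?_⟩
    calc dist (x k) ((T ^ k) z) ≤ dist (x k) y + dist ((T ^ k) z) y := dist_triangle_right _ _ _
      _ < ε / 2 + ε / 2 := add_lt_add hky hz
      _ = ε := add_halves ε
  · refine ⟨(T ^ (-k)) (x k),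
      Finset.mem_union_left _ (Finset.mem_image_of_mem _ (hfar.mem_toFinset.mpr hk)), ?_⟩
    rwa [← Homeomorph.mul_apply, ← zpow_add, add_neg_cancel, zpow_zero, Homeomorph.one_apply,
      dist_self]
end

section
/- Let T be a homeomorphism of a compact metric space X. For every σ > 0 there exists δ > 0 such that for every two-sided δ-pseudotrajectory {x_k}_{k∈ℤ}, the set {k ∈ ℤ : x_k ∉ U_σ(CR(X,T))} is finite. -/
open Metric Filter Set Topology
open scoped Classical

variable {X : Type*}

/-!
If infinitely many `x k` lay outside `U_σ(CR)`, compactness would give two of them, `x k` and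
`x l` with `k < l`, at distance `< δ`; closing up the segment `x k, …, x l` of the
pseudotrajectory yields a periodic `2δ`-chain through `x k`. A second compactness argument shows
that points on sufficiently fine periodic chains lie in `U_σ(CR)`, since a point approximated by
points on ever finer periodic chains is itself chain recurrent.
-/

def HasChainLoop [PseudoMetricSpace X] (T : X → X) (d : ℝ) (y : X) : Prop :=
  ∃ n : ℕ, 1 ≤ n ∧ ∃ c : ℕ → X, c 0 = y ∧ c n = y ∧ ∀ k < n, dist (c (k + 1)) (T (c k)) ≤ d

section ChainLoops

variable [PseudoMetricSpace X] {T : X → X}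

theorem chainRec_iff_forall_hasChainLoop {y : X} :
    ChainRec T y ↔ ∀ d > 0, HasChainLoop T d y :=
  Iff.rfl

theorem HasChainLoop.mono {d d' : ℝ} {y : X} (h : HasChainLoop T d y) (hdd' : d ≤ d') :
    HasChainLoop T d' y :=
  let ⟨n, hn, c, hc0, hcn, hc⟩ := h
  ⟨n, hn, c, hc0, hcn, fun k hk => (hc k hk).trans hdd'⟩

theorem hasChainLoop_of_chain {d : ℝ} {n : ℕ} (hn : 1 ≤ n) {c : ℕ → X}
    (hc : ∀ k < n, dist (c (k + 1)) (T (c k)) ≤ d) :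
    HasChainLoop T (d + dist (c n) (c 0)) (c 0) := by
  refine ⟨n, hn, Function.update c n (c 0), by simp [show (0 : ℕ) ≠ n by omega], by simp,
    fun k hk => ?_⟩
  rw [Function.update_of_ne hk.ne]
  by_cases hkn : k + 1 = n
  · rw [hkn, Function.update_self]
    calc dist (c 0) (T (c k)) ≤ dist (c 0) (c n) + dist (c n) (T (c k)) := dist_triangle _ _ _
      _ ≤ dist (c n) (c 0) + d := by rw [dist_comm]; gcongr; exact hkn ▸ hc k hk
      _ = d + dist (c n) (c 0) := add_comm _ _
  · rw [Function.update_of_ne hkn]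
    exact (hc k hk).trans (le_add_of_nonneg_right dist_nonneg)

theorem HasChainLoop.move {d : ℝ} {y' : X} (h : HasChainLoop T d y') (y : X) :
    HasChainLoop T (dist y y' + d + dist (T y) (T y')) y := by
  obtain ⟨n, hn, c, hc0, hcn, hc⟩ := h
  set f : X → X := fun z => if z = y' then y else z
  have hf : ∀ z, dist (f z) z ≤ dist y y' ∧ dist (T z) (T (f z)) ≤ dist (T y) (T y') := by
    intro z
    by_cases hz : z = y'
    · simp [f, hz, dist_comm]
    · simp [f, hz]
  refine ⟨n, hn, f ∘ c, by simp [f, hc0], by simp [f, hcn], fun k hk => ?_⟩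
  calc dist (f (c (k + 1))) (T (f (c k)))
      ≤ dist (f (c (k + 1))) (c (k + 1)) + dist (c (k + 1)) (T (c k))
          + dist (T (c k)) (T (f (c k))) := dist_triangle4 _ _ _ _
    _ ≤ dist y y' + d + dist (T y) (T y') :=
        add_le_add (add_le_add (hf _).1 (hc k hk)) (hf _).2

theorem chainRec_of_forall_mem_closure {y : X} (hT : ContinuousAt T y)
    (h : ∀ d > 0, y ∈ closure {y' | HasChainLoop T d y'}) : ChainRec T y := by
  refine chainRec_iff_forall_hasChainLoop.mpr fun d hd => ?_
  obtain ⟨η, hη, hTη⟩ := Metric.continuousAt_iff.mp hT (d / 3) (by positivity)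
  obtain ⟨y', hy', hyy'⟩ := Metric.mem_closure_iff.mp (h (d / 3) (by positivity)) _
    (lt_min hη (by positivity : 0 < d / 3))
  have hyy'η : dist y' y < η := (dist_comm y y' ▸ hyy').trans_le (min_le_left _ _)
  refine (hy'.move y).mono ?_
  linarith [(hyy'.trans_le (min_le_right _ _)).le, (dist_comm (T y) (T y') ▸ hTη hyy'η).le]

theorem IsPseudoTrajZ.hasChainLoop {δ : ℝ} {x : ℤ → X} (hx : IsPseudoTrajZ T δ x) {k l : ℤ}
    (hkl : k < l) : HasChainLoop T (δ + dist (x l) (x k)) (x k) := by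
  have hn : k + ((l - k).toNat : ℤ) = l := by omega
  have hloop := hasChainLoop_of_chain (n := (l - k).toNat) (c := fun i : ℕ => x (k + i))
    (by omega) (fun i _ => by simpa [add_assoc] using hx (k + i))
  simpa only [hn, Nat.cast_zero, add_zero] using hloop

end ChainLoops

theorem exists_pos_hasChainLoop_subset [PseudoMetricSpace X] [CompactSpace X] {T : X → X}
    (hT : Continuous T) {U : Set X} (hU : IsOpen U) (hCR : {p | ChainRec T p} ⊆ U) :
    ∃ d > 0, {y | HasChainLoop T d y} ⊆ U := by
  set K : Ioi (0 : ℝ) → Set X := fun d => closure {y | HasChainLoop T d y}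
  have hK_inter : Uᶜ ∩ ⋂ d, K d = ∅ := by
    refine eq_empty_of_forall_notMem fun y ⟨hyU, hyK⟩ => hyU (hCR ?_)
    exact chainRec_of_forall_mem_closure hT.continuousAt fun d hd => mem_iInter.mp hyK ⟨d, hd⟩
  have hK_directed : Directed (· ⊇ ·) K := fun a b =>
    ⟨⟨min a b, mem_Ioi.mpr (lt_min a.2 b.2)⟩,
      closure_mono fun _ hy => hy.mono (min_le_left _ _),
      closure_mono fun _ hy => hy.mono (min_le_right _ _)⟩
  obtain ⟨d, hd⟩ := hU.isClosed_compl.isCompact.elim_directed_family_closed K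
    (fun _ => isClosed_closure) hK_inter hK_directed
  exact ⟨d, d.2, fun y hy => by_contra fun hyU => hd.subset ⟨hyU, subset_closure hy⟩⟩

theorem Set.Infinite.exists_lt_dist_lt [PseudoMetricSpace X] [CompactSpace X] {ι : Type*}
    [LinearOrder ι] {S : Set ι} (hS : S.Infinite) (x : ι → X) {ε : ℝ} (hε : 0 < ε) :
    ∃ k ∈ S, ∃ l ∈ S, k < l ∧ dist (x l) (x k) < ε := by
  obtain ⟨t, -, ht, hcov⟩ := finite_cover_balls_of_compact (isCompact_univ (X := X)) (half_pos hε)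
  have hcenter : ∀ i, ∃ p ∈ t, x i ∈ ball p (ε / 2) := fun i => by
    simpa using hcov (mem_univ (x i))
  choose p hpt hp using hcenter
  obtain ⟨k, hk, l, hl, hkl, hpkl⟩ := hS.exists_lt_map_eq_of_mapsTo (fun i _ => hpt i) ht
  refine ⟨k, hk, l, hl, hkl, ?_⟩
  calc dist (x l) (x k) ≤ dist (x l) (p l) + dist (p k) (x k) := by
        rw [hpkl]; exact dist_triangle _ _ _
    _ < ε / 2 + ε / 2 := add_lt_add (hp l) (dist_comm (x k) (p k) ▸ hp k)
    _ = ε := add_halves ε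

theorem stmt12 [MetricSpace X] [CompactSpace X] (T : X ≃ₜ X) :
    ∀ σ > (0 : ℝ), ∃ δ > (0 : ℝ), ∀ x : ℤ → X, IsPseudoTrajZ (⇑T) δ x →
      {k : ℤ | x k ∉ Metric.thickening σ {p : X | ChainRec (⇑T) p}}.Finite := by
  intro σ hσ
  obtain ⟨d, hd, hloops⟩ :=
    exists_pos_hasChainLoop_subset T.continuous isOpen_thickening (self_subset_thickening hσ _)
  refine ⟨d / 2, half_pos hd, fun x hx => Set.not_infinite.mp fun hinf => ?_⟩
  obtain ⟨k, hk, l, -, hkl, hlk⟩ := hinf.exists_lt_dist_lt x (half_pos hd)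
  exact hk (hloops ((hx.hasChainLoop hkl).mono (by linarith)))
end

section
/- Let T : X → X be a continuous map of a compact metric space. For every ε > 0 there exists δ > 0 such that for every δ-pseudotrajectory {p_k}_{k≥0}, the set K_ε = {k ≥ 0 : p_k ∈ U_ε(R(X,T))} satisfies liminf_{N→∞} #(K_ε ∩ [0,N])/N > 1 − ε, where R(X,T) denotes the set of recurrent points. -/
open Metric Filter Set Topology
open scoped Classical

variable {X : Type*}

/-! If the claim failed for some `ε`, there would be pseudotrajectories with ever smaller jumps
whose empirical measures over ever longer windows give `U_ε(R)` mass at most `1 - ε / 2`.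
A weak limit `μ` of these empirical measures is `T`-invariant: for a bounded continuous `f`, the
averages of `f ∘ T - f` telescope up to the jumps, which are uniformly small, and two boundary
terms, which are divided by the window length. By the portmanteau theorem `μ` still gives the open
set `U_ε(R)` mass at most `1 - ε / 2`, whereas by Poincaré recurrence `μ` is carried by `R`. -/

open MeasureTheory Finset
open scoped ENNReal BoundedContinuousFunction

section Recurrence

variable [TopologicalSpace X] {T : X → X}

theorem mem_recurrentPts_of_frequently [FirstCountableTopology X] {x : X}
    (h : ∀ s ∈ 𝓝 x, ∃ᶠ n in atTop, T^[n] x ∈ s) : x ∈ RecurrentPts T :=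
  (mapClusterPt_iff_frequently.2 h).tendsto_subseq

theorem MeasureTheory.MeasurePreserving.measure_compl_recurrentPts_eq_zero
    [SecondCountableTopology X] [MeasurableSpace X] [OpensMeasurableSpace X] {μ : Measure X}
    [IsFiniteMeasure μ] (hT : MeasurePreserving T μ μ) : μ (RecurrentPts T)ᶜ = 0 :=
  measure_mono_null (fun _ hx hfreq => hx (mem_recurrentPts_of_frequently hfreq))
    (ae_iff.1 hT.conservative.ae_frequently_mem_of_mem_nhds)

end Recurrence

theorem abs_sum_range_sub_le_of_abs_sub_succ_le {a b : ℕ → ℝ} {η C : ℝ}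
    (hab : ∀ k, |b k - a (k + 1)| ≤ η) (ha : ∀ k, |a k| ≤ C) (M : ℕ) :
    |∑ k ∈ range M, (b k - a k)| ≤ M * η + 2 * C := by
  have hsplit : ∑ k ∈ range M, (b k - a k)
      = ∑ k ∈ range M, (b k - a (k + 1)) + (a M - a 0) := by
    rw [← sum_range_sub a M, ← sum_add_distrib]
    exact sum_congr rfl fun k _ => by ring
  calc |∑ k ∈ range M, (b k - a k)|
      ≤ ∑ k ∈ range M, |b k - a (k + 1)| + (|a M| + |a 0|) := by
        rw [hsplit]
        exact (abs_add_le _ _).trans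
          (add_le_add (abs_sum_le_sum_abs _ _) (abs_sub _ _))
    _ ≤ ∑ _k ∈ range M, η + (C + C) := by
        gcongr with k
        exacts [hab k, ha M, ha 0]
    _ = M * η + 2 * C := by rw [sum_const, card_range, nsmul_eq_mul]; ring

section Empirical

variable [MeasurableSpace X]

noncomputable def empiricalMeasure (p : ℕ → X) (N : ℕ) : ProbabilityMeasure X :=
  ⟨(N + 1 : ℝ≥0∞)⁻¹ • ∑ k ∈ range (N + 1), Measure.dirac (p k), ⟨by
    rw [Measure.smul_apply, Measure.finsetSum_apply]
    simp only [measure_univ, sum_const, card_range, nsmul_eq_mul, mul_one, smul_eq_mul]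
    push_cast
    exact ENNReal.inv_mul_cancel (by simp) (by simp)⟩⟩

theorem empiricalMeasure_apply (p : ℕ → X) (N : ℕ) {s : Set X} (hs : MeasurableSet s) :
    (empiricalMeasure p N : Measure X) s = ENNReal.ofReal (cnt {k | p k ∈ s} N / (N + 1)) := by
  rw [empiricalMeasure, ProbabilityMeasure.coe_mk, Measure.smul_apply, Measure.finsetSum_apply]
  simp only [Measure.dirac_apply' _ hs, cnt, Set.indicator_apply, Pi.one_apply,
    Set.mem_ofPred_eq, sum_boole, smul_eq_mul]
  rw [ENNReal.ofReal_div_of_pos (by positivity)]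
  norm_cast
  rw [ENNReal.div_eq_inv_mul]

variable [TopologicalSpace X] [OpensMeasurableSpace X]

theorem integral_empiricalMeasure (p : ℕ → X) (N : ℕ) (f : X →ᵇ ℝ) :
    ∫ x, f x ∂(empiricalMeasure p N : Measure X) = (∑ k ∈ range (N + 1), f (p k)) / (N + 1) := by
  rw [empiricalMeasure, ProbabilityMeasure.coe_mk, integral_smul_measure,
    integral_finsetSum_measure]
  · simp only [integral_dirac' _ _ f.continuous.stronglyMeasurable, ENNReal.toReal_inv,
      smul_eq_mul, div_eq_inv_mul]
    norm_cast
  · exact fun k _ => f.integrable _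

theorem abs_integral_comp_sub_integral_empiricalMeasure_le {T : X → X} (hT : Continuous T)
    (p : ℕ → X) (N : ℕ) (f : X →ᵇ ℝ) {η : ℝ} (hη : ∀ k, |f (T (p k)) - f (p (k + 1))| ≤ η) :
    |∫ x, f (T x) ∂(empiricalMeasure p N : Measure X)
      - ∫ x, f x ∂(empiricalMeasure p N : Measure X)|
      ≤ η + 2 * ‖f‖ / (N + 1) := by
  have hN : (0 : ℝ) < N + 1 := by positivity
  have hsum := abs_sum_range_sub_le_of_abs_sub_succ_le hη
    (fun k => (Real.norm_eq_abs _).symm.trans_le (f.norm_coe_le_norm (p k))) (N + 1)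
  rw [show ∫ x, f (T x) ∂(empiricalMeasure p N : Measure X) = _ from
      integral_empiricalMeasure p N (f.compContinuous ⟨T, hT⟩), integral_empiricalMeasure,
    ← sub_div, ← sum_sub_distrib, abs_div, abs_of_pos hN, div_le_iff₀ hN]
  push_cast at hsum
  calc _ ≤ (N + 1) * η + 2 * ‖f‖ := hsum
    _ = _ := by field_simp

end Empirical

section WeakLimit

variable [MetricSpace X] [CompactSpace X] [MeasurableSpace X] [BorelSpace X]
  {T : X → X} {ι : Type*} {L : Filter ι} {δ : ι → ℝ} {p : ι → ℕ → X} {N : ι → ℕ}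

theorem tendsto_integral_comp_sub_integral_empiricalMeasure (hT : Continuous T) (f : X →ᵇ ℝ)
    (hδ : Tendsto δ L (𝓝 0)) (hp : ∀ i, IsPseudoTraj T (δ i) (p i)) (hN : Tendsto N L atTop) :
    Tendsto (fun i => ∫ x, f (T x) ∂(empiricalMeasure (p i) (N i) : Measure X)
      - ∫ x, f x ∂(empiricalMeasure (p i) (N i) : Measure X)) L (𝓝 0) := by
  rw [Metric.tendsto_nhds]
  intro η hη
  obtain ⟨θ, hθ, hfθ⟩ := Metric.uniformContinuous_iff.1
    (CompactSpace.uniformContinuous_of_continuous f.continuous) (η / 2) (half_pos hη)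
  have htail : Tendsto (fun i => 2 * ‖f‖ / ((N i : ℝ) + 1)) L (𝓝 0) :=
    tendsto_const_nhds.div_atTop
      (tendsto_atTop_add_const_right _ 1 (tendsto_natCast_atTop_atTop.comp hN))
  filter_upwards [hδ.eventually (eventually_lt_nhds hθ),
    htail.eventually (eventually_lt_nhds (half_pos hη))] with i hδi htaili
  have hstep : ∀ k, |f (T (p i k)) - f (p i (k + 1))| ≤ η / 2 := fun k =>
    (hfθ ((dist_comm _ _).trans_le (hp i k) |>.trans_lt hδi)).le
  rw [Real.dist_eq, sub_zero]
  linarith [abs_integral_comp_sub_integral_empiricalMeasure_le hT (p i) (N i) f hstep]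

theorem measurePreserving_of_tendsto_empiricalMeasure [L.NeBot] (hT : Continuous T)
    (hδ : Tendsto δ L (𝓝 0)) (hp : ∀ i, IsPseudoTraj T (δ i) (p i)) (hN : Tendsto N L atTop)
    {μ : ProbabilityMeasure X} (hμ : Tendsto (fun i => empiricalMeasure (p i) (N i)) L (𝓝 μ)) :
    MeasurePreserving T μ μ := by
  refine ⟨hT.measurable, ext_of_forall_integral_eq_of_IsFiniteMeasure fun f => ?_⟩
  rw [integral_map hT.aemeasurable f.continuous.aestronglyMeasurable]
  have hcomp := ProbabilityMeasure.tendsto_iff_forall_integral_tendsto.1 hμ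
    (f.compContinuous ⟨T, hT⟩)
  have hf := ProbabilityMeasure.tendsto_iff_forall_integral_tendsto.1 hμ f
  exact sub_eq_zero.1 (tendsto_nhds_unique (hcomp.sub hf)
    (tendsto_integral_comp_sub_integral_empiricalMeasure hT f hδ hp hN))

end WeakLimit

theorem cnt_div_le_two (K : Set ℕ) (N : ℕ) : cnt K N / N ≤ 2 := by
  rcases Nat.eq_zero_or_pos N with rfl | hN
  · simp
  have hcard : cnt K N ≤ N + 1 := by
    unfold cnt
    exact_mod_cast (card_filter_le _ _).trans (card_range (N + 1)).le
  rw [div_le_iff₀ (by exact_mod_cast hN)]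
  linarith [(Nat.one_le_cast (α := ℝ)).2 hN]

theorem frequently_empiricalMeasure_lt_of_liminf_lt [MeasurableSpace X] {p : ℕ → X} {U : Set X}
    (hU : MeasurableSet U) {c : ℝ}
    (h : liminf (fun N : ℕ => cnt {k | p k ∈ U} N / N) atTop < c) :
    ∃ᶠ N in atTop, (empiricalMeasure p N : Measure X) U < ENNReal.ofReal c := by
  have hbdd : IsBoundedUnder (· ≤ ·) atTop (fun N : ℕ => cnt {k | p k ∈ U} N / N) :=
    isBoundedUnder_of ⟨2, cnt_div_le_two _⟩
  refine ((frequently_lt_of_liminf_lt hbdd.isCoboundedUnder_flip h).and_eventually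
    (eventually_gt_atTop 0)).mono fun N ⟨hN, hN0⟩ => ?_
  have hcnt : 0 ≤ cnt {k | p k ∈ U} N := Nat.cast_nonneg _
  rw [empiricalMeasure_apply p N hU, ENNReal.ofReal_lt_ofReal_iff_of_nonneg (by positivity)]
  exact lt_of_le_of_lt (div_le_div_of_nonneg_left hcnt (by exact_mod_cast hN0) (by linarith)) hN

theorem stmt16 [MetricSpace X] [CompactSpace X] (T : X → X) (hT : Continuous T) :
    ∀ ε > (0 : ℝ), ∃ δ > (0 : ℝ), ∀ p : ℕ → X, IsPseudoTraj T δ p →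
      1 - ε < Filter.liminf
        (fun N : ℕ => cnt {k : ℕ | p k ∈ Metric.thickening ε (RecurrentPts T)} N / (N : ℝ))
        atTop := by
  intro ε hε
  by_contra! h
  borelize X
  set U := thickening ε (RecurrentPts T)
  have hU : IsOpen U := isOpen_thickening
  have hbad : ∀ n : ℕ, ∃ p, IsPseudoTraj T (1 / (n + 1)) p ∧
      ∃ N ≥ n, (empiricalMeasure p N : Measure X) U < ENNReal.ofReal (1 - ε / 2) := fun n => by
    obtain ⟨p, hp, hlim⟩ := h (1 / (n + 1)) (by positivity)
    exact ⟨p, hp, (frequently_empiricalMeasure_lt_of_liminf_lt hU.measurableSet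
      (hlim.trans_lt (by linarith))).forall_exists_of_atTop n⟩
  choose p hp N hN hpU using hbad
  obtain ⟨μ, φ, hφ, hlim⟩ := CompactSpace.tendsto_subseq fun n => empiricalMeasure (p n) (N n)
  have hμT : MeasurePreserving T μ μ :=
    measurePreserving_of_tendsto_empiricalMeasure hT
      (tendsto_one_div_add_atTop_nhds_zero_nat.comp hφ.tendsto_atTop) (fun j => hp (φ j))
      (tendsto_atTop_mono (fun j => (hφ.id_le j).trans (hN (φ j))) tendsto_id) hlim
  have hμU : (μ : Measure X) U = 1 := (prob_compl_eq_zero_iff hU.measurableSet).1 <|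
    measure_mono_null (compl_subset_compl.2 (self_subset_thickening hε _))
      hμT.measure_compl_recurrentPts_eq_zero
  have hliminf := ProbabilityMeasure.le_liminf_measure_open_of_tendsto hlim hU
  rw [hμU] at hliminf
  have hle : (1 : ℝ≥0∞) ≤ ENNReal.ofReal (1 - ε / 2) :=
    hliminf.trans (liminf_le_of_frequently_le' (.of_forall fun j => (hpU (φ j)).le))
  exact hle.not_gt (ENNReal.ofReal_lt_one.2 (by linarith))
end

section
/- Let T be a homeomorphism of a compact metric space X and B ⊆ X a closed ball. Suppose ξ ∈ X is such that the set N = {n ∈ ℕ : T^n(ξ) ∈ B} is m-syndetic, and let ω̃ be the set of limit points of the sequence {T^{n}(ξ) : n ∈ N}. Then ω̃ ⊆ B and the ω-limit set of ξ equals ω̃ ∪ T(ω̃) ∪ … ∪ T^m(ω̃); consequently the closed ball B contains a point of the form T^q(ζ) for some minimal point ζ and some q ∈ ℤ. -/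
open Metric Filter Set Topology
open scoped Classical

variable {X : Type*}

lemma omegaSet_eq_omegaLimit [MetricSpace X] (T : X → X) (ξ : X) :
    omegaSet T ξ = omegaLimit atTop (fun n x => T^[n] x) {ξ} := by
  ext p
  rw [mem_omegaLimit_singleton_iff_map_cluster_point, mapClusterPt_iff_frequently]
  constructor
  · rintro ⟨φ, hφ, hlim⟩ s hs
    exact hφ.tendsto_atTop.frequently
      ((hlim.eventually (eventually_of_mem hs fun x hx => hx)).frequently)
  · intro h
    have H : ∀ n : ℕ, ∃ᶠ k in atTop, T^[k] ξ ∈ Metric.ball p (1 / (n + 1)) :=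
      fun n => h _ (Metric.ball_mem_nhds p (by positivity))
    obtain ⟨φ, hφ, hmem⟩ := extraction_forall_of_frequently H
    refine ⟨φ, hφ, ?_⟩
    rw [Metric.tendsto_atTop]
    intro ε hε
    obtain ⟨N, hN⟩ := exists_nat_one_div_lt hε
    refine ⟨N, fun n hn => ?_⟩
    calc dist (T^[φ n] ξ) p < 1 / (n + 1) := by simpa [Metric.mem_ball] using hmem n
      _ ≤ 1 / (N + 1) := by
          apply one_div_le_one_div_of_le (by positivity)
          exact_mod_cast Nat.succ_le_succ hn
      _ < ε := hN

lemma exists_minimalPt_mem [MetricSpace X] [CompactSpace X] (T : X → X) (hT : Continuous T)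
    {Ω : Set X} (hΩne : Ω.Nonempty) (hΩc : IsClosed Ω) (hΩi : MapsTo T Ω Ω) :
    ∃ ζ ∈ Ω, IsMinimalPt T ζ := by
  set S : Set (Set X) := {M | M.Nonempty ∧ IsClosed M ∧ MapsTo T M M ∧ M ⊆ Ω} with hS
  have hchainpf : ∀ c ⊆ S, IsChain (· ⊆ ·) c → c.Nonempty → ∃ lb ∈ S, ∀ s ∈ c, lb ⊆ s := by
    intro c hcS hchain hcne
    obtain ⟨M₀, hM₀⟩ := hcne
    haveI : Nonempty c := ⟨⟨M₀, hM₀⟩⟩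
    refine ⟨⋂₀ c, ⟨?_, ?_, ?_, ?_⟩, fun s hs => sInter_subset_of_mem hs⟩
    · haveI : IsRefl (Set X) (flip fun x1 x2 : Set X => x1 ⊆ x2) := ⟨fun a => subset_rfl⟩
      exact IsCompact.nonempty_sInter_of_directed_nonempty_isCompact_isClosed
        hchain.symm.directedOn (fun U hU => (hcS hU).1)
        (fun U hU => (hcS hU).2.1.isCompact) (fun U hU => (hcS hU).2.1)
    · exact isClosed_sInter fun U hU => (hcS hU).2.1
    · intro x hx
      exact fun U hU => (hcS hU).2.2.1 (hx U hU)
    · exact (sInter_subset_of_mem hM₀).trans (hcS hM₀).2.2.2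
  obtain ⟨M, hMΩ, hM⟩ := zorn_superset_nonempty S hchainpf Ω ⟨hΩne, hΩc, hΩi, subset_rfl⟩
  obtain ⟨hMne, hMc, hMi, hMsub⟩ := hM.prop
  obtain ⟨ζ, hζ⟩ := hMne
  have key : ∀ y ∈ M, closure (fwdOrbit T y) = M := by
    intro y hy
    have horb : fwdOrbit T y ⊆ M := by
      rintro _ ⟨k, rfl⟩
      induction k with
      | zero => exact hy
      | succ n ih =>
          simp only []
          rw [show (n + 1) = n.succ from rfl, Function.iterate_succ_apply']
          exact hMi ih
    have hsub : closure (fwdOrbit T y) ⊆ M := hMc.closure_subset_iff.mpr horb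
    have hmem : closure (fwdOrbit T y) ∈ S := by
      refine ⟨⟨y, subset_closure ⟨0, rfl⟩⟩, isClosed_closure, ?_, hsub.trans hMsub⟩
      intro z hz
      have h1 : T z ∈ closure (T '' fwdOrbit T y) :=
        image_closure_subset_closure_image hT ⟨z, hz, rfl⟩
      refine closure_mono ?_ h1
      rintro _ ⟨_, ⟨k, rfl⟩, rfl⟩
      exact ⟨k + 1, by
        simp only []
        rw [show (k + 1) = k.succ from rfl, Function.iterate_succ_apply']⟩
    exact hsub.antisymm (hM.2 hmem hsub)
  refine ⟨ζ, hMsub hζ, fun z hz => ?_⟩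
  rw [key ζ hζ] at hz
  exact (key z hz).trans (key ζ hζ).symm

theorem stmt19 [MetricSpace X] [CompactSpace X] (T : X ≃ₜ X)
    (x₀ : X) (r : ℝ) (ξ : X) (m : ℕ)
    (hsyn : ∀ a : ℕ, ∃ k : ℕ, T^[k] ξ ∈ Metric.closedBall x₀ r ∧ a ≤ k ∧ k ≤ a + m) :
    ({p : X | ∃ φ : ℕ → ℕ, StrictMono φ ∧ (∀ j, T^[φ j] ξ ∈ Metric.closedBall x₀ r) ∧
        Tendsto (fun j => T^[φ j] ξ) atTop (nhds p)} ⊆ Metric.closedBall x₀ r) ∧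
    (omegaSet (⇑T) ξ = ⋃ i ∈ Finset.range (m + 1), (fun p => T^[i] p) ''
      {p : X | ∃ φ : ℕ → ℕ, StrictMono φ ∧ (∀ j, T^[φ j] ξ ∈ Metric.closedBall x₀ r) ∧
        Tendsto (fun j => T^[φ j] ξ) atTop (nhds p)}) ∧
    (∃ ζ : X, IsMinimalPt (⇑T) ζ ∧ ∃ q : ℤ, zIter T q ζ ∈ Metric.closedBall x₀ r) := by
  set W : Set X := {p : X | ∃ φ : ℕ → ℕ, StrictMono φ ∧
      (∀ j, T^[φ j] ξ ∈ Metric.closedBall x₀ r) ∧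
      Tendsto (fun j => T^[φ j] ξ) atTop (nhds p)} with hWdef
  have hWB : W ⊆ Metric.closedBall x₀ r := by
    rintro p ⟨φ, hφ, hmem, hlim⟩
    exact Metric.isClosed_closedBall.mem_of_tendsto hlim (Filter.Eventually.of_forall hmem)
  have heq : omegaSet (⇑T) ξ = ⋃ i ∈ Finset.range (m + 1), (fun p => T^[i] p) '' W := by
    apply Set.Subset.antisymm
    · rintro p ⟨φ, hφ, hlim⟩
      choose k hkB hk1 hk2 using fun j : ℕ => hsyn (φ (j + m) - m)
      have hmle : ∀ j : ℕ, m ≤ φ (j + m) := fun j =>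
        le_trans (Nat.le_add_left m j) hφ.le_apply
      have hksum : ∀ j, k j ≤ φ (j + m) := by
        intro j
        have h := hk2 j
        have h2 := hmle j
        omega
      have hige : ∀ j, φ (j + m) - k j ≤ m := by
        intro j
        have h := hk1 j
        have h2 := hmle j
        omega
      obtain ⟨i, him, hfreq⟩ : ∃ i ≤ m, ∃ᶠ j in atTop, φ (j + m) - k j = i := by
        by_contra hcon
        push_neg at hcon
        have hev : ∀ᶠ j in atTop, ∀ i ∈ Finset.range (m + 1), ¬(φ (j + m) - k j = i) :=
          (Filter.eventually_all_finset _).mpr fun i hi =>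
            (hcon i (Nat.lt_succ_iff.mp (Finset.mem_range.mp hi)))
        obtain ⟨j, hj⟩ := hev.exists
        exact hj _ (Finset.mem_range.mpr (Nat.lt_succ_of_le (hige j))) rfl
      obtain ⟨ψ, hψ, hψi⟩ := Filter.extraction_of_frequently_atTop hfreq
      have hkey : ∀ j, i + k (ψ j) = φ (ψ j + m) := by
        intro j
        have h1 := hψi j
        have h2 := hksum (ψ j)
        omega
      have hκmono : StrictMono fun j => k (ψ j) := by
        intro a b hab
        have h := hφ (show ψ a + m < ψ b + m by have := hψ hab; omega)
        have ha := hkey a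
        have hb := hkey b
        simp only []
        omega
      obtain ⟨q, hqB, ρ, hρ, hconv⟩ :=
        (Metric.isClosed_closedBall.isCompact).tendsto_subseq
          (x := fun j => T^[k (ψ j)] ξ) (fun j => hkB (ψ j))
      have hqW : q ∈ W := ⟨fun n => k (ψ (ρ n)), hκmono.comp hρ, fun n => hkB _, hconv⟩
      have hlim1 : Tendsto (fun n => T^[φ (ψ (ρ n) + m)] ξ) atTop (nhds p) :=
        hlim.comp ((tendsto_add_atTop_nat m).comp ((hψ.comp hρ).tendsto_atTop))
      have hlim2 : Tendsto (fun n => T^[φ (ψ (ρ n) + m)] ξ) atTop (nhds (T^[i] q)) := by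
        have hcont : Continuous (⇑T)^[i] := T.continuous.iterate i
        have h := (hcont.tendsto q).comp hconv
        refine h.congr fun n => ?_
        simp only [Function.comp_apply]
        rw [← hkey (ρ n), Function.iterate_add_apply]
      have hpq : p = T^[i] q := tendsto_nhds_unique hlim1 hlim2
      exact Set.mem_biUnion (Finset.mem_range.mpr (Nat.lt_succ_of_le him)) ⟨q, hqW, hpq.symm⟩
    · intro p hp
      simp only [Set.mem_iUnion, Finset.mem_range, Set.mem_image] at hp
      obtain ⟨i, hi, q, hqW, rfl⟩ := hp
      obtain ⟨φ, hφ, hmem, hlim⟩ := hqW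
      refine ⟨fun j => i + φ j, fun a b h => by show i + φ a < i + φ b; have := hφ h; omega, ?_⟩
      have hcont : Continuous (⇑T)^[i] := T.continuous.iterate i
      have h := (hcont.tendsto q).comp hlim
      refine h.congr fun j => ?_
      simp only [Function.comp_apply]
      exact (Function.iterate_add_apply (⇑T) i (φ j) ξ).symm
  refine ⟨hWB, heq, ?_⟩
  have hΩeq := omegaSet_eq_omegaLimit (⇑T) ξ
  have hΩc : IsClosed (omegaSet (⇑T) ξ) := by
    rw [hΩeq]; exact isClosed_omegaLimit _ _ _
  have hΩne : (omegaSet (⇑T) ξ).Nonempty := by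
    rw [hΩeq]; exact nonempty_omegaLimit atTop _ {ξ} (Set.singleton_nonempty ξ)
  have hΩi : MapsTo (⇑T) (omegaSet (⇑T) ξ) (omegaSet (⇑T) ξ) := by
    rintro p ⟨φ, hφ, hlim⟩
    refine ⟨fun j => 1 + φ j, fun a b h => by show 1 + φ a < 1 + φ b; have := hφ h; omega, ?_⟩
    have h := (T.continuous.tendsto p).comp hlim
    refine h.congr fun j => ?_
    simp only [Function.comp_apply]
    rw [Function.iterate_add_apply, Function.iterate_one]
  obtain ⟨ζ, hζΩ, hζmin⟩ := exists_minimalPt_mem (⇑T) T.continuous hΩne hΩc hΩi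
  have hζU : ζ ∈ ⋃ i ∈ Finset.range (m + 1), (fun p => T^[i] p) '' W := heq ▸ hζΩ
  simp only [Set.mem_iUnion, Finset.mem_range, Set.mem_image] at hζU
  obtain ⟨i, hi, q, hqW, hq⟩ := hζU
  refine ⟨ζ, hζmin, -(i : ℤ), ?_⟩
  have hzq : zIter T (-(i : ℤ)) ζ = q := by
    rcases Nat.eq_zero_or_pos i with h0 | hpos
    · subst h0
      simp only [Function.iterate_zero, id_eq] at hq
      simp only [Nat.cast_zero, neg_zero, zIter, le_refl, if_pos, Int.toNat_zero,
        Function.iterate_zero, id_eq]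
      exact hq.symm
    · have hneg : ¬(0 : ℤ) ≤ -(i : ℤ) := by
        simp only [not_le]
        omega
      rw [zIter, if_neg hneg]
      have htn : (-(-(i : ℤ))).toNat = i := by omega
      rw [htn, ← hq]
      exact Function.LeftInverse.iterate T.symm_apply_apply i q
  rw [hzq]
  exact hWB hqW
end
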